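/- arXiv:2101.02310 — 2 statements merged into one kernel-verified Lean document; each statement's English description precedes it below -/
import Mathlib

section
/- The language {a^(2^n) | n ∈ ℕ} over the one-letter alphabet {a} is a repetition-free (2,1)-PHRS language which is not semilinear. -/
/-!
The grammar has one table `S → SS | a`, `a → F`, `F → F` over labels of type 2, with `a`
terminal and `F` a failure symbol. All right-hand sides are string graphs, and replacing every
hyperedge of a string graph by string graphs yields the string graph of the concatenated strings,
so up to isomorphism the grammar rewrites strings in parallel. From `S^(2^n)` one step gives
`S^(2^(n+1))`, `a^(2^n)`, or a string containing both `a` and `S`; in the latter every `a` becomes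
`F`, which never disappears. Hence the language consists of the string graphs of the `a^(2^n)`.

Their Parikh image `{2^n}` is infinite, so one of its linear components contains a ray `p + c q`
with `q > 0`; but `p + 2q` and `p + 3q` cannot both be powers of two, since
`p + 2q < p + 3q < 2 (p + 2q)`.
-/


namespace PHR

/-- A signature: a finite set of labels (encoded as naturals) together with a
typing function assigning an arity to every label. -/
structure Signature where
  labels : Finset ℕ
  typ : ℕ → ℕ

/-- A (finite) hypergraph with nodes and hyperedges encoded as naturals.
`att` and `lab` are only meaningful on members of `E`. -/
structure Hypergraph where
  V : Finset ℕ
  E : Finset ℕ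
  att : ℕ → List ℕ
  lab : ℕ → ℕ
  ext : List ℕ

namespace Hypergraph

/-- The type of a hypergraph is the length of its external node sequence. -/
def type (H : Hypergraph) : ℕ := H.ext.length

/-- Well-formedness of a hypergraph over a signature: attachments and external
nodes are nodes, labels come from the signature, and the attachment length of
every hyperedge agrees with the type of its label. -/
def Over (H : Hypergraph) (sig : Signature) : Prop :=
  (∀ e ∈ H.E, ∀ v ∈ H.att e, v ∈ H.V) ∧
  (∀ v ∈ H.ext, v ∈ H.V) ∧
  (∀ e ∈ H.E, H.lab e ∈ sig.labels ∧ (H.att e).length = sig.typ (H.lab e))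

/-- A hypergraph is repetition-free if its external nodes are pairwise distinct. -/
def RepetitionFree (H : Hypergraph) : Prop := H.ext.Nodup

/-- A hypergraph is proper if no hyperedge has a repeated attachment node. -/
def Proper (H : Hypergraph) : Prop := ∀ e ∈ H.E, (H.att e).Nodup

end Hypergraph

/-- Isomorphism of hypergraphs: label-, attachment- and external-node-preserving
bijections on nodes and hyperedges. -/
def Iso (G H : Hypergraph) : Prop :=
  ∃ fV fE : ℕ → ℕ,
    Set.InjOn fV ↑G.V ∧ Finset.image fV G.V = H.V ∧
    Set.InjOn fE ↑G.E ∧ Finset.image fE G.E = H.E ∧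
    (∀ e ∈ G.E, H.lab (fE e) = G.lab e) ∧
    (∀ e ∈ G.E, H.att (fE e) = (G.att e).map fV) ∧
    H.ext = G.ext.map fV

/-- The handle `X•` of a label `X`: one hyperedge labelled `X` attached to
`type X` distinct nodes, all of which are external. -/
def handle (sig : Signature) (X : ℕ) : Hypergraph where
  V := Finset.range (sig.typ X)
  E := {0}
  att := fun _ => List.range (sig.typ X)
  lab := fun _ => X
  ext := List.range (sig.typ X)

/-- The string graph `w•` of a string `w` (over type-2 labels). -/
def stringGraph (w : List ℕ) : Hypergraph where
  V := Finset.range (w.length + 1)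
  E := Finset.Icc 1 w.length
  att := fun e => [e - 1, e]
  lab := fun e => w.getD (e - 1) 0
  ext := [0, w.length]

/-- The nodes of the disjoint union underlying a replacement: old nodes of `H`
(`Sum.inl`) and, for each replaced hyperedge `e ∈ B`, the nodes of `σ e`
(`Sum.inr (e, ·)`). -/
def nodePiece (H : Hypergraph) (B : Finset ℕ) (σ : ℕ → Hypergraph) :
    Set (ℕ ⊕ ℕ × ℕ) :=
  (Sum.inl '' ↑H.V) ∪ {x | ∃ e ∈ B, ∃ u ∈ (σ e).V, x = Sum.inr (e, u)}

/-- The hyperedges of the result of a replacement: old hyperedges of `H` not in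
`B`, and the hyperedges of each `σ e` for `e ∈ B`. -/
def edgePiece (H : Hypergraph) (B : Finset ℕ) (σ : ℕ → Hypergraph) :
    Set (ℕ ⊕ ℕ × ℕ) :=
  (Sum.inl '' (↑H.E \ ↑B)) ∪ {x | ∃ e ∈ B, ∃ e' ∈ (σ e).E, x = Sum.inr (e, e')}

/-- The gluing relation of a replacement: for `e ∈ B`, the `j`-th external node
of `σ e` is identified with the `j`-th attachment node of `e`. -/
def glue (H : Hypergraph) (B : Finset ℕ) (σ : ℕ → Hypergraph) :
    (ℕ ⊕ ℕ × ℕ) → (ℕ ⊕ ℕ × ℕ) → Prop := fun x y =>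
  ∃ e ∈ B, ∃ j : ℕ, j < (σ e).ext.length ∧ j < (H.att e).length ∧
    x = Sum.inl ((H.att e).getD j 0) ∧ y = Sum.inr (e, (σ e).ext.getD j 0)

/-- `IsReplacement H B σ H'` says that `H'` is (up to isomorphism) the result
`H[e/σ e : e ∈ B]` of simultaneously replacing every hyperedge `e ∈ B` of `H`
by `σ e`: nodes of `H'` are the quotient of the disjoint union of the nodes of
`H` and of the `σ e` by exactly the equivalence generated by the gluing
relation, hyperedges are the remaining hyperedges of `H` together with those of
the `σ e`, with labels and attachments inherited, and the external nodes are
those of `H`. -/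
def IsReplacement (H : Hypergraph) (B : Finset ℕ) (σ : ℕ → Hypergraph)
    (H' : Hypergraph) : Prop :=
  B ⊆ H.E ∧
  (∀ e ∈ B, (σ e).type = (H.att e).length) ∧
  ∃ f : (ℕ ⊕ ℕ × ℕ) → ℕ,
    (∀ x ∈ nodePiece H B σ, ∀ y ∈ nodePiece H B σ,
      (f x = f y ↔ Relation.EqvGen (glue H B σ) x y)) ∧
    ↑H'.V = f '' nodePiece H B σ ∧
    H'.ext = H.ext.map (fun v => f (Sum.inl v)) ∧
    ∃ g : (ℕ ⊕ ℕ × ℕ) → ℕ,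
      Set.InjOn g (edgePiece H B σ) ∧
      ↑H'.E = g '' edgePiece H B σ ∧
      (∀ e ∈ H.E, e ∉ B →
        H'.lab (g (Sum.inl e)) = H.lab e ∧
        H'.att (g (Sum.inl e)) = (H.att e).map (fun v => f (Sum.inl v))) ∧
      (∀ e ∈ B, ∀ e' ∈ (σ e).E,
        H'.lab (g (Sum.inr (e, e'))) = (σ e).lab e' ∧
        H'.att (g (Sum.inr (e, e'))) = ((σ e).att e').map (fun v => f (Sum.inr (e, v))))

/-- A table over a signature: a finite set of well-typed rules containing at
least one rule for every label of the signature. -/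
structure Table (sig : Signature) where
  rules : Set (ℕ × Hypergraph)
  finite : rules.Finite
  rule_lhs : ∀ r ∈ rules, r.1 ∈ sig.labels
  rule_rhs : ∀ r ∈ rules, r.2.Over sig ∧ r.2.type = sig.typ r.1
  total : ∀ L ∈ sig.labels, ∃ R, (L, R) ∈ rules

def Table.RepetitionFree {sig : Signature} (T : Table sig) : Prop :=
  ∀ r ∈ T.rules, r.2.RepetitionFree

def Table.Proper {sig : Signature} (T : Table sig) : Prop :=
  ∀ r ∈ T.rules, r.2.Proper

/-- A parallel direct derivation step: every hyperedge of `H` is simultaneously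
replaced using a rule of the table `T`. -/
def ParallelStep {sig : Signature} (T : Table sig) (H H' : Hypergraph) : Prop :=
  ∃ σ : ℕ → Hypergraph,
    (∀ e ∈ H.E, (H.lab e, σ e) ∈ T.rules) ∧ IsReplacement H H.E σ H'

/-- Parallel derivation using a set of tables: a finite (possibly empty)
sequence of parallel direct derivation steps, working up to isomorphism. -/
def Derives {sig : Signature} (𝒯 : Set (Table sig)) :
    Hypergraph → Hypergraph → Prop :=
  Relation.ReflTransGen (fun X Y => (∃ T ∈ 𝒯, ParallelStep T X Y) ∨ Iso X Y)

/-- A parallel hyperedge replacement grammar. -/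
structure PHRGrammar where
  sig : Signature
  A : Finset ℕ
  A_sub : A ⊆ sig.labels
  S : ℕ
  S_mem : S ∈ sig.labels
  tables : Set (Table sig)
  tables_fin : tables.Finite
  tables_ne : tables.Nonempty

/-- `G.Bounded k l`: `G` is a `(k,l)`-PHR grammar, i.e. it uses at most `l`
tables and every rule has left-hand side of type at most `k`. -/
def PHRGrammar.Bounded (G : PHRGrammar) (k l : ℕ) : Prop :=
  G.tables.ncard ≤ l ∧ ∀ T ∈ G.tables, ∀ r ∈ T.rules, G.sig.typ r.1 ≤ k

def PHRGrammar.RepetitionFree (G : PHRGrammar) : Prop :=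
  ∀ T ∈ G.tables, T.RepetitionFree

def PHRGrammar.Proper (G : PHRGrammar) : Prop := ∀ T ∈ G.tables, T.Proper

/-- The language of a PHR grammar: all hypergraphs derivable from the handle of
the start symbol whose hyperedge labels are all terminal. -/
def PHRGrammar.lang (G : PHRGrammar) : Set Hypergraph :=
  {H | Derives G.tables (handle G.sig G.S) H ∧ ∀ e ∈ H.E, H.lab e ∈ G.A}

def IsPHRLanguage (k l : ℕ) (L : Set Hypergraph) : Prop :=
  ∃ G : PHRGrammar, G.Bounded k l ∧ G.lang = L

def IsRFPHRLanguage (k l : ℕ) (L : Set Hypergraph) : Prop :=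
  ∃ G : PHRGrammar, G.Bounded k l ∧ G.RepetitionFree ∧ G.lang = L

def IsProperPHRLanguage (k l : ℕ) (L : Set Hypergraph) : Prop :=
  ∃ G : PHRGrammar, G.Bounded k l ∧ G.Proper ∧ G.lang = L

/-- `k`-PHR languages: `(k,l)`-PHR languages for some `l ≥ 1`. -/
def IsPHRLanguageK (k : ℕ) (L : Set Hypergraph) : Prop :=
  ∃ l, 1 ≤ l ∧ IsPHRLanguage k l L

def IsRFPHRLanguageK (k : ℕ) (L : Set Hypergraph) : Prop :=
  ∃ l, 1 ≤ l ∧ IsRFPHRLanguage k l L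

def IsProperPHRLanguageK (k : ℕ) (L : Set Hypergraph) : Prop :=
  ∃ l, 1 ≤ l ∧ IsProperPHRLanguage k l L

/-- A hyperedge replacement grammar. -/
structure HRGrammar where
  sig : Signature
  N : Finset ℕ
  N_sub : N ⊆ sig.labels
  S : ℕ
  S_mem : S ∈ N
  rules : Set (ℕ × Hypergraph)
  rules_fin : rules.Finite
  rule_lhs : ∀ r ∈ rules, r.1 ∈ N
  rule_rhs : ∀ r ∈ rules, r.2.Over sig ∧ r.2.type = sig.typ r.1

/-- A (sequential) direct derivation step of a HR grammar: a single hyperedge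
is replaced using a rule. -/
def HRStep (G : HRGrammar) (H H' : Hypergraph) : Prop :=
  ∃ e ∈ H.E, ∃ R, (H.lab e, R) ∈ G.rules ∧ IsReplacement H {e} (fun _ => R) H'

/-- The language of a HR grammar: hypergraphs derivable from the handle of the
start symbol containing no non-terminally labelled hyperedge. -/
def HRGrammar.lang (G : HRGrammar) : Set Hypergraph :=
  {H | Relation.ReflTransGen (fun X Y => HRStep G X Y ∨ Iso X Y)
        (handle G.sig G.S) H ∧ ∀ e ∈ H.E, H.lab e ∉ G.N}

def HRGrammar.Bounded (G : HRGrammar) (k : ℕ) : Prop :=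
  ∀ r ∈ G.rules, G.sig.typ r.1 ≤ k

def HRGrammar.RepetitionFree (G : HRGrammar) : Prop :=
  ∀ r ∈ G.rules, r.2.RepetitionFree

def HRGrammar.Proper (G : HRGrammar) : Prop := ∀ r ∈ G.rules, r.2.Proper

def IsHRLanguage (k : ℕ) (L : Set Hypergraph) : Prop :=
  ∃ G : HRGrammar, G.Bounded k ∧ G.lang = L

def IsRFHRLanguage (k : ℕ) (L : Set Hypergraph) : Prop :=
  ∃ G : HRGrammar, G.Bounded k ∧ G.RepetitionFree ∧ G.lang = L

def IsProperHRLanguage (k : ℕ) (L : Set Hypergraph) : Prop :=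
  ∃ G : HRGrammar, G.Bounded k ∧ G.Proper ∧ G.lang = L

/-- A hypergraph language consists only of string graphs. -/
def StringGraphLang (L : Set Hypergraph) : Prop :=
  ∀ H ∈ L, ∃ w : List ℕ, Iso H (stringGraph w)

/-- The strings represented by the string graphs of a hypergraph language. -/
def STR (L : Set Hypergraph) : Set (List ℕ) :=
  {w | ∃ H ∈ L, Iso H (stringGraph w)}

/-- `(k,l)`-PHRS languages: string languages of `(k,l)`-PHR grammars generating
string graph languages, up to the empty string. -/
def IsPHRSLanguage (k l : ℕ) (L : Set (List ℕ)) : Prop :=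
  ∃ G : PHRGrammar, G.Bounded k l ∧ StringGraphLang G.lang ∧
    STR G.lang = L \ {[]}

def IsRFPHRSLanguage (k l : ℕ) (L : Set (List ℕ)) : Prop :=
  ∃ G : PHRGrammar, G.Bounded k l ∧ G.RepetitionFree ∧ StringGraphLang G.lang ∧
    STR G.lang = L \ {[]}

def IsPHRSLanguageK (k : ℕ) (L : Set (List ℕ)) : Prop :=
  ∃ l, 1 ≤ l ∧ IsPHRSLanguage k l L

def IsRFPHRSLanguageK (k : ℕ) (L : Set (List ℕ)) : Prop :=
  ∃ l, 1 ≤ l ∧ IsRFPHRSLanguage k l L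

def IsHRSLanguage (k : ℕ) (L : Set (List ℕ)) : Prop :=
  ∃ G : HRGrammar, G.Bounded k ∧ StringGraphLang G.lang ∧ STR G.lang = L \ {[]}

def IsRFHRSLanguage (k : ℕ) (L : Set (List ℕ)) : Prop :=
  ∃ G : HRGrammar, G.Bounded k ∧ G.RepetitionFree ∧ StringGraphLang G.lang ∧
    STR G.lang = L \ {[]}


/-! ### ET0L grammars -/

/-- One parallel rewriting step of an ET0L table applied to a string:
every letter is replaced by a right-hand side of the table. -/
def ET0LStep (T : Finset (ℕ × List ℕ)) (u v : List ℕ) : Prop :=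
  ∃ ws : List (List ℕ), List.Forall₂ (fun a w => (a, w) ∈ T) u ws ∧ v = ws.flatten

/-- An ET0L grammar: a finite alphabet, terminal subalphabet, start symbol and
a non-empty finite set of tables, each table being a finite left-total relation
between symbols and strings. -/
structure ET0LGrammar where
  symbols : Finset ℕ
  A : Finset ℕ
  A_sub : A ⊆ symbols
  S : ℕ
  S_mem : S ∈ symbols
  tables : Finset (Finset (ℕ × List ℕ))
  tables_ne : tables.Nonempty
  tables_wf : ∀ T ∈ tables,
    (∀ r ∈ T, r.1 ∈ symbols ∧ ∀ b ∈ r.2, b ∈ symbols) ∧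
    ∀ a ∈ symbols, ∃ w, (a, w) ∈ T

/-- The language of an ET0L grammar. -/
def ET0LGrammar.lang (G : ET0LGrammar) : Set (List ℕ) :=
  {w | Relation.ReflTransGen (fun u v => ∃ T ∈ G.tables, ET0LStep T u v)
        [G.S] w ∧ ∀ a ∈ w, a ∈ G.A}

/-- E0L languages: languages of ET0L grammars with exactly one table. -/
def IsE0LLanguage (L : Set (List ℕ)) : Prop :=
  ∃ G : ET0LGrammar, G.tables.card = 1 ∧ G.lang = L

def IsET0LLanguage (L : Set (List ℕ)) : Prop :=
  ∃ G : ET0LGrammar, G.lang = L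

/-! ### Substitutions of hypergraphs -/

/-- A substitution of hypergraphs on `A` (w.r.t. a signature): each label of
`A` is assigned a non-empty language of hypergraphs of the right type. -/
def IsHGSubstitution (sig : Signature) (A : Finset ℕ) (s : ℕ → Set Hypergraph) : Prop :=
  ∀ X ∈ A, (s X).Nonempty ∧ ∀ R ∈ s X, R.type = sig.typ X

/-- The image of a single hypergraph under a substitution of hypergraphs. -/
def substHG (s : ℕ → Set Hypergraph) (H : Hypergraph) : Set Hypergraph :=
  {H' | ∃ σ : ℕ → Hypergraph,
    (∀ e ∈ H.E, σ e ∈ s (H.lab e)) ∧ IsReplacement H H.E σ H'}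

/-- The image of a hypergraph language under a substitution of hypergraphs. -/
def substHGLang (s : ℕ → Set Hypergraph) (L : Set Hypergraph) : Set Hypergraph :=
  ⋃ H ∈ L, substHG s H

/-- Iterated application of a list of substitutions of hypergraphs. -/
def iterSubstHG : List (ℕ → Set Hypergraph) → Set Hypergraph → Set Hypergraph
  | [], L => L
  | s :: ss, L => iterSubstHG ss (substHGLang s L)

/-- A hypergraph language is over `A` if all hyperedge labels of all its
members lie in `A`. -/
def LangOver (A : Finset ℕ) (L : Set Hypergraph) : Prop :=
  ∀ H ∈ L, ∀ e ∈ H.E, H.lab e ∈ A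

/-- The four properties of hypergraph languages considered in substitution
closure results: being repetition-free, proper, a graph language, and a string
graph language. -/
def hgProps : List (Set Hypergraph → Prop) :=
  [fun L => ∀ H ∈ L, H.RepetitionFree,
   fun L => ∀ H ∈ L, H.Proper,
   fun L => ∀ H ∈ L, ∀ e ∈ H.E, (H.att e).length = 2,
   fun L => ∀ H ∈ L, ∃ w : List ℕ, Iso H (stringGraph w)]

/-! ### Operations on string languages -/

/-- The set of strings obtained from `w` by replacing each letter `a` of `w`
by a string of `h a`. -/
def substStr (h : ℕ → Set (List ℕ)) (w : List ℕ) : Set (List ℕ) :=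
  {w' | ∃ ws : List (List ℕ), List.Forall₂ (fun a u => u ∈ h a) w ws ∧ w' = ws.flatten}

/-- The image of a string language under a substitution of strings. -/
def substStrLang (h : ℕ → Set (List ℕ)) (L : Set (List ℕ)) : Set (List ℕ) :=
  ⋃ w ∈ L, substStr h w

/-- `n`-fold iterated application of a substitution of strings. -/
def iterSubstStr (h : ℕ → Set (List ℕ)) : ℕ → Set (List ℕ) → Set (List ℕ)
  | 0, L => L
  | n + 1, L => substStrLang h (iterSubstStr h n L)

/-- Concatenation of string languages. -/
def concatLang (L₁ L₂ : Set (List ℕ)) : Set (List ℕ) :=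
  {w | ∃ u ∈ L₁, ∃ v ∈ L₂, w = u ++ v}

/-- Kleene plus of a string language. -/
def kleenePlus (L : Set (List ℕ)) : Set (List ℕ) :=
  {w | ∃ ws : List (List ℕ), ws ≠ [] ∧ (∀ u ∈ ws, u ∈ L) ∧ w = ws.flatten}

/-- A string language is regular if it is accepted by a deterministic
finite-state automaton over a finite alphabet. -/
def IsRegular (L : Set (List ℕ)) : Prop :=
  ∃ (n : ℕ) (δ : Fin (n + 1) → ℕ → Fin (n + 1)) (q0 : Fin (n + 1))
    (acc : Finset (Fin (n + 1))) (alph : Finset ℕ),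
    L = {w | (∀ a ∈ w, a ∈ alph) ∧ w.foldl δ q0 ∈ acc}

/-! ### Semilinear sets -/

def LinearSet {d : ℕ} (S : Set (Fin d → ℕ)) : Prop :=
  ∃ (p : Fin d → ℕ) (n : ℕ) (ps : Fin n → Fin d → ℕ),
    S = {v | ∃ c : Fin n → ℕ, v = fun i => p i + ∑ j, c j * ps j i}

def SemilinearSet {d : ℕ} (S : Set (Fin d → ℕ)) : Prop :=
  ∃ (m : ℕ) (Ss : Fin m → Set (Fin d → ℕ)),
    (∀ i, LinearSet (Ss i)) ∧ S = ⋃ i, Ss i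

/-- The Parikh vector of a string w.r.t. an ordered alphabet `a`. -/
def parikh {d : ℕ} (a : Fin d → ℕ) (w : List ℕ) : Fin d → ℕ :=
  fun i => w.count (a i)

/-- A string language is semilinear if its set of Parikh vectors is
semilinear. -/
def SemilinearLang {d : ℕ} (a : Fin d → ℕ) (L : Set (List ℕ)) : Prop :=
  SemilinearSet {v | ∃ w ∈ L, v = parikh a w}

/-! ### Word problems of groups -/

/-- Evaluation of a word over the generators `x` and their formal inverses:
letter `2 * i` denotes the generator `x i` and letter `2 * i + 1` denotes its
inverse; letters outside the alphabet evaluate to the identity. -/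
def wordEval {G : Type*} [Group G] {n : ℕ} (x : Fin n → G) (w : List ℕ) : G :=
  (w.map fun a =>
    if h : a / 2 < n then (if a % 2 = 0 then x ⟨a / 2, h⟩ else (x ⟨a / 2, h⟩)⁻¹)
    else 1).prod

/-- The word problem of a group w.r.t. a finite generating sequence `x`:
the words over the generators and their formal inverses evaluating to the
identity. -/
def wordProblem {G : Type*} [Group G] {n : ℕ} (x : Fin n → G) : Set (List ℕ) :=
  {w | (∀ a ∈ w, a < 2 * n) ∧ wordEval x w = 1}

/-- The string language `{a^(2^n) | n ∈ ℕ}` over the one-letter alphabet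
`{a}`, with `a` encoded as `0`. -/
def powStringLang : Set (List ℕ) :=
  {w | ∃ n : ℕ, w = List.replicate (2 ^ n) 0}

namespace Hypergraph

def AttNodes (H : Hypergraph) : Prop := ∀ e ∈ H.E, ∀ v ∈ H.att e, v ∈ H.V

def ExtNodes (H : Hypergraph) : Prop := ∀ v ∈ H.ext, v ∈ H.V

end Hypergraph

structure IsoMaps (G H : Hypergraph) (fV fE : ℕ → ℕ) : Prop where
  injOn_V : Set.InjOn fV G.V
  image_V : G.V.image fV = H.V
  injOn_E : Set.InjOn fE G.E
  image_E : G.E.image fE = H.E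
  lab : ∀ e ∈ G.E, H.lab (fE e) = G.lab e
  att : ∀ e ∈ G.E, H.att (fE e) = (G.att e).map fV
  ext : H.ext = G.ext.map fV

theorem iso_iff_exists_isoMaps {G H : Hypergraph} : Iso G H ↔ ∃ fV fE, IsoMaps G H fV fE :=
  ⟨fun ⟨fV, fE, h₁, h₂, h₃, h₄, h₅, h₆, h₇⟩ => ⟨fV, fE, h₁, h₂, h₃, h₄, h₅, h₆, h₇⟩,
    fun ⟨fV, fE, h₁, h₂, h₃, h₄, h₅, h₆, h₇⟩ => ⟨fV, fE, h₁, h₂, h₃, h₄, h₅, h₆, h₇⟩⟩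

namespace IsoMaps

variable {G H K : Hypergraph} {fV fE gV gE : ℕ → ℕ}

theorem mem_V (h : IsoMaps G H fV fE) {v : ℕ} (hv : v ∈ G.V) : fV v ∈ H.V :=
  h.image_V ▸ Finset.mem_image_of_mem fV hv

theorem mem_E (h : IsoMaps G H fV fE) {e : ℕ} (he : e ∈ G.E) : fE e ∈ H.E :=
  h.image_E ▸ Finset.mem_image_of_mem fE he

theorem exists_of_mem_V (h : IsoMaps G H fV fE) {v : ℕ} (hv : v ∈ H.V) :
    ∃ u ∈ G.V, fV u = v :=
  Finset.mem_image.1 (h.image_V ▸ hv)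

theorem exists_of_mem_E (h : IsoMaps G H fV fE) {e : ℕ} (he : e ∈ H.E) :
    ∃ d ∈ G.E, fE d = e :=
  Finset.mem_image.1 (h.image_E ▸ he)

theorem refl (H : Hypergraph) : IsoMaps H H id id :=
  ⟨Set.injOn_id _, by simp, Set.injOn_id _, by simp, by simp, by simp, by simp⟩

theorem trans (h₁ : IsoMaps G H fV fE) (h₂ : IsoMaps H K gV gE) :
    IsoMaps G K (gV ∘ fV) (gE ∘ fE) where
  injOn_V := h₂.injOn_V.comp h₁.injOn_V fun _ => h₁.mem_V
  image_V := by rw [← Finset.image_image, h₁.image_V, h₂.image_V]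
  injOn_E := h₂.injOn_E.comp h₁.injOn_E fun _ => h₁.mem_E
  image_E := by rw [← Finset.image_image, h₁.image_E, h₂.image_E]
  lab e he := by simp only [Function.comp_apply, h₂.lab _ (h₁.mem_E he), h₁.lab e he]
  att e he := by
    simp only [Function.comp_apply, h₂.att _ (h₁.mem_E he), h₁.att e he, List.map_map]
  ext := by rw [h₂.ext, h₁.ext, List.map_map]

theorem symm (h : IsoMaps G H fV fE) (hatt : G.AttNodes) (hext : G.ExtNodes) :
    IsoMaps H G (Function.invFunOn fV G.V) (Function.invFunOn fE G.E) := by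
  have hV := h.injOn_V.leftInvOn_invFunOn
  have hE := h.injOn_E.leftInvOn_invFunOn
  have map_inv : ∀ l : List ℕ, (∀ v ∈ l, v ∈ G.V) →
      (l.map fV).map (Function.invFunOn fV G.V) = l := fun l hl => by
    rw [List.map_map]
    exact List.map_congr_left (fun v hv => hV (hl v hv)) |>.trans l.map_id
  refine ⟨?_, ?_, ?_, ?_, ?_, ?_, ?_⟩
  · intro a ha b hb hab
    obtain ⟨u, hu, rfl⟩ := h.exists_of_mem_V ha
    obtain ⟨u', hu', rfl⟩ := h.exists_of_mem_V hb
    rw [hV hu, hV hu'] at hab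
    rw [hab]
  · apply Finset.coe_injective
    rw [Finset.coe_image, ← h.image_V, Finset.coe_image, hV.image_image]
  · intro a ha b hb hab
    obtain ⟨d, hd, rfl⟩ := h.exists_of_mem_E ha
    obtain ⟨d', hd', rfl⟩ := h.exists_of_mem_E hb
    rw [hE hd, hE hd'] at hab
    rw [hab]
  · apply Finset.coe_injective
    rw [Finset.coe_image, ← h.image_E, Finset.coe_image, hE.image_image]
  · intro e he
    obtain ⟨d, hd, rfl⟩ := h.exists_of_mem_E he
    rw [hE hd, h.lab d hd]
  · intro e he
    obtain ⟨d, hd, rfl⟩ := h.exists_of_mem_E he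
    rw [hE hd, h.att d hd, map_inv _ (hatt d hd)]
  · rw [h.ext, map_inv _ hext]

end IsoMaps

namespace Iso

theorem refl (H : Hypergraph) : Iso H H :=
  iso_iff_exists_isoMaps.2 ⟨id, id, IsoMaps.refl H⟩

theorem trans {G H K : Hypergraph} (h₁ : Iso G H) (h₂ : Iso H K) : Iso G K := by
  obtain ⟨fV, fE, h₁⟩ := iso_iff_exists_isoMaps.1 h₁
  obtain ⟨gV, gE, h₂⟩ := iso_iff_exists_isoMaps.1 h₂
  exact iso_iff_exists_isoMaps.2 ⟨_, _, h₁.trans h₂⟩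

theorem symm {G H : Hypergraph} (h : Iso G H) (hatt : G.AttNodes) (hext : G.ExtNodes) :
    Iso H G := by
  obtain ⟨fV, fE, h⟩ := iso_iff_exists_isoMaps.1 h
  exact iso_iff_exists_isoMaps.2 ⟨_, _, h.symm hatt hext⟩

theorem forall_lab_iff {G H : Hypergraph} {p : ℕ → Prop} (h : Iso G H) :
    (∀ e ∈ G.E, p (G.lab e)) ↔ ∀ e ∈ H.E, p (H.lab e) := by
  obtain ⟨fV, fE, h⟩ := iso_iff_exists_isoMaps.1 h
  constructor
  · intro hG e he
    obtain ⟨d, hd, rfl⟩ := h.exists_of_mem_E he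
    exact h.lab d hd ▸ hG d hd
  · intro hH e he
    exact h.lab e he ▸ hH _ (h.mem_E he)

end Iso

section StringGraph

variable {u w : List ℕ}

@[simp] theorem mem_stringGraph_V {v : ℕ} : v ∈ (stringGraph w).V ↔ v ≤ w.length := by
  simp [stringGraph]

@[simp] theorem mem_stringGraph_E {e : ℕ} :
    e ∈ (stringGraph w).E ↔ 1 ≤ e ∧ e ≤ w.length := by
  simp [stringGraph]

theorem stringGraph_attNodes (w : List ℕ) : (stringGraph w).AttNodes := by
  intro e he v hv
  simp only [mem_stringGraph_E] at he
  simp only [stringGraph, List.mem_cons, List.not_mem_nil, or_false] at hv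
  rw [mem_stringGraph_V]
  omega

theorem stringGraph_extNodes (w : List ℕ) : (stringGraph w).ExtNodes := by
  intro v hv
  simp only [stringGraph, List.mem_cons, List.not_mem_nil, or_false] at hv
  rw [mem_stringGraph_V]
  omega

theorem stringGraph_repetitionFree (hw : w ≠ []) : (stringGraph w).RepetitionFree := by
  simpa [Hypergraph.RepetitionFree, stringGraph, eq_comm] using hw

theorem stringGraph_over {sig : Signature} (hw : ∀ a ∈ w, a ∈ sig.labels ∧ sig.typ a = 2) :
    (stringGraph w).Over sig := by
  refine ⟨stringGraph_attNodes w, stringGraph_extNodes w, fun e he => ?_⟩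
  rw [mem_stringGraph_E] at he
  have ha := hw _ (List.getElem_mem (show e - 1 < w.length by omega))
  simp only [stringGraph, List.getD_eq_getElem _ _ (show e - 1 < w.length by omega)]
  exact ⟨ha.1, ha.2.symm⟩

/-- An isomorphism fixes the first external node and is then forced, edge by edge, to be the
identity. -/
theorem eq_of_iso_stringGraph (h : Iso (stringGraph u) (stringGraph w)) : u = w := by
  obtain ⟨fV, fE, h⟩ := iso_iff_exists_isoMaps.1 h
  have hlen : u.length = w.length := by
    have := congrArg Finset.card h.image_V
    rw [Finset.card_image_of_injOn h.injOn_V] at this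
    simpa [stringGraph] using this
  have hfV0 : fV 0 = 0 := by
    have := h.ext
    simp only [stringGraph, List.map_cons, List.map_nil, List.cons.injEq] at this
    exact this.1.symm
  have hedge : ∀ e, 1 ≤ e → e ≤ u.length →
      fE e = fV e ∧ fE e - 1 = fV (e - 1) ∧ 1 ≤ fE e := by
    intro e he₁ he₂
    have he : e ∈ (stringGraph u).E := mem_stringGraph_E.2 ⟨he₁, he₂⟩
    have hatt := h.att e he
    simp only [stringGraph, List.map_cons, List.map_nil, List.cons.injEq] at hatt
    exact ⟨hatt.2.1, hatt.1, (mem_stringGraph_E.1 (h.mem_E he)).1⟩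
  have hfV : ∀ i ≤ u.length, fV i = i := by
    intro i
    induction i with
    | zero => exact fun _ => hfV0
    | succ i ih =>
      intro hi
      have := hedge (i + 1) (by omega) hi
      simp only [Nat.add_sub_cancel] at this
      have := ih (by omega)
      omega
  refine List.ext_getElem hlen fun i hi _ => ?_
  have hlab := h.lab (i + 1) (mem_stringGraph_E.2 ⟨by omega, by omega⟩)
  rw [(hedge (i + 1) (by omega) hi).1, hfV (i + 1) hi] at hlab
  simpa [stringGraph, List.getD_eq_getElem, hi, hlen ▸ hi] using hlab.symm

theorem stringGraph_injective : Function.Injective stringGraph :=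
  fun _ _ h => eq_of_iso_stringGraph (h ▸ Iso.refl _)

theorem stringGraph_lab (w : List ℕ) {i : ℕ} (hi : i < w.length) :
    (stringGraph w).lab (i + 1) = w[i] := by
  simp [stringGraph, hi]

theorem forall_lab_stringGraph_iff {p : ℕ → Prop} :
    (∀ e ∈ (stringGraph w).E, p ((stringGraph w).lab e)) ↔ ∀ a ∈ w, p a := by
  constructor
  · intro h a ha
    obtain ⟨i, hi, rfl⟩ := List.getElem_of_mem ha
    simpa [stringGraph_lab w hi] using h (i + 1) (mem_stringGraph_E.2 ⟨by omega, by omega⟩)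
  · intro h e he
    obtain ⟨i, rfl⟩ : ∃ i, e = i + 1 := ⟨e - 1, by rw [mem_stringGraph_E] at he; omega⟩
    have hi : i < w.length := by rw [mem_stringGraph_E] at he; omega
    exact stringGraph_lab w hi ▸ h _ (List.getElem_mem hi)

end StringGraph

theorem eq_of_mem_Ioc_of_monotone {c : ℕ → ℕ} (hc : Monotone c) {i j x : ℕ}
    (hi : x ∈ Set.Ioc (c i) (c (i + 1))) (hj : x ∈ Set.Ioc (c j) (c (j + 1))) : i = j := by
  simp only [Set.mem_Ioc] at hi hj
  by_contra hij
  rcases Nat.lt_or_gt_of_ne hij with h | h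
  · have := hc (show i + 1 ≤ j by omega); omega
  · have := hc (show j + 1 ≤ i by omega); omega

section Offset

variable {us : List (List ℕ)}

def offset (us : List (List ℕ)) (i : ℕ) : ℕ := (us.take i).flatten.length

@[simp] theorem offset_zero : offset us 0 = 0 := by simp [offset]

theorem offset_succ (us : List (List ℕ)) (i : ℕ) :
    offset us (i + 1) = offset us i + (us.getD i []).length := by
  by_cases hi : i < us.length
  · rw [offset, offset, List.take_add_one, List.getElem?_eq_getElem hi, Option.toList_some,
      List.flatten_append, List.length_append, List.flatten_singleton, List.getD_eq_getElem _ _ hi]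
  · simp [offset, List.take_of_length_le (show us.length ≤ i by omega),
      List.take_of_length_le (show us.length ≤ i + 1 by omega),
      List.getElem?_eq_none (not_lt.1 hi)]

theorem offset_eq_offset_pred_add {e : ℕ} (he : 1 ≤ e) :
    offset us e = offset us (e - 1) + (us.getD (e - 1) []).length := by
  rw [← offset_succ, Nat.sub_add_cancel he]

theorem offset_mono : Monotone (offset us) :=
  monotone_nat_of_le_succ fun i => by rw [offset_succ]; omega

theorem offset_length : offset us us.length = us.flatten.length := by simp [offset]

theorem offset_strictMonoOn (hne : ∀ v ∈ us, v ≠ []) :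
    StrictMonoOn (offset us) (Set.Iic us.length) := by
  intro i _ j hj hij
  have hi : i < us.length := lt_of_lt_of_le hij hj
  have : 0 < (us.getD i []).length := by
    rw [List.getD_eq_getElem _ _ hi]; exact List.length_pos_iff.2 (hne _ (List.getElem_mem hi))
  calc offset us i < offset us (i + 1) := by rw [offset_succ]; omega
    _ ≤ offset us j := offset_mono hij

theorem getD_flatten_offset_add {i t : ℕ} (hi : i < us.length) (ht : t < (us.getD i []).length) :
    us.flatten.getD (offset us i + t) 0 = (us.getD i []).getD t 0 := by
  rw [List.getD_eq_getElem _ _ hi] at ht ⊢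
  have hsplit : us.flatten = (us.take i).flatten ++ (us[i] ++ (us.drop (i + 1)).flatten) := by
    rw [← List.flatten_cons, ← List.drop_eq_getElem_cons hi, ← List.flatten_append,
      List.take_append_drop]
  rw [hsplit, offset, List.getD_append_right _ _ _ _ (by omega), Nat.add_sub_cancel_left,
    List.getD_append _ _ _ _ ht]

theorem exists_offset_lt_le {x : ℕ} (hx₀ : 0 < x) (hx : x ≤ us.flatten.length) :
    ∃ i < us.length, offset us i < x ∧ x ≤ offset us (i + 1) := by
  classical
  have hex : ∃ j, x ≤ offset us j := ⟨us.length, offset_length ▸ hx⟩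
  have hspec := Nat.find_spec hex
  obtain ⟨i, hi⟩ : ∃ i, Nat.find hex = i + 1 :=
    Nat.exists_eq_succ_of_ne_zero fun h => by rw [h] at hspec; simp at hspec; omega
  have hlt : offset us i < x := not_le.1 (Nat.find_min hex (by omega))
  rw [hi] at hspec
  refine ⟨i, ?_, hlt, hspec⟩
  by_contra h
  have := offset_mono (us := us) (show us.length ≤ i by omega)
  rw [offset_length] at this
  omega

end Offset

theorem eqvGen_map {α β : Type*} {r : α → α → Prop} {s : β → β → Prop} (k : α → β)
    (hk : ∀ a b, r a b → s (k a) (k b)) {a b : α} (h : Relation.EqvGen r a b) :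
    Relation.EqvGen s (k a) (k b) :=
  ((Relation.EqvGen.is_equivalence s).comap k).eqvGen_iff.1
    (Relation.EqvGen.mono (fun a b hab => Relation.EqvGen.rel _ _ (hk a b hab)) a b h)

theorem eqvGen_apply_eq {α β : Type*} {r : α → α → Prop} (f : α → β)
    (hf : ∀ a b, r a b → f a = f b) {a b : α} (h : Relation.EqvGen r a b) : f a = f b :=
  (eq_equivalence.comap f).eqvGen_iff.1 (Relation.EqvGen.mono hf a b h)

structure ReplacementMaps (H : Hypergraph) (B : Finset ℕ) (σ : ℕ → Hypergraph)
    (H' : Hypergraph) (f g : ℕ ⊕ ℕ × ℕ → ℕ) : Prop where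
  subset : B ⊆ H.E
  type_eq : ∀ e ∈ B, (σ e).type = (H.att e).length
  eq_iff_eqvGen : ∀ x ∈ nodePiece H B σ, ∀ y ∈ nodePiece H B σ,
    (f x = f y ↔ Relation.EqvGen (glue H B σ) x y)
  V_eq : ↑H'.V = f '' nodePiece H B σ
  ext_eq : H'.ext = H.ext.map (fun v => f (Sum.inl v))
  injOn_edgePiece : Set.InjOn g (edgePiece H B σ)
  E_eq : ↑H'.E = g '' edgePiece H B σ
  old_edge : ∀ e ∈ H.E, e ∉ B → H'.lab (g (Sum.inl e)) = H.lab e ∧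
    H'.att (g (Sum.inl e)) = (H.att e).map (fun v => f (Sum.inl v))
  new_edge : ∀ e ∈ B, ∀ e' ∈ (σ e).E, H'.lab (g (Sum.inr (e, e'))) = (σ e).lab e' ∧
    H'.att (g (Sum.inr (e, e'))) = ((σ e).att e').map (fun v => f (Sum.inr (e, v)))

theorem isReplacement_iff {H H' : Hypergraph} {B : Finset ℕ} {σ : ℕ → Hypergraph} :
    IsReplacement H B σ H' ↔ ∃ f g, ReplacementMaps H B σ H' f g :=
  ⟨fun ⟨h₁, h₂, f, h₃, h₄, h₅, g, h₆, h₇, h₈, h₉⟩ => ⟨f, g, h₁, h₂, h₃, h₄, h₅, h₆, h₇, h₈, h₉⟩,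
    fun ⟨f, g, h₁, h₂, h₃, h₄, h₅, h₆, h₇, h₈, h₉⟩ => ⟨h₁, h₂, f, h₃, h₄, h₅, g, h₆, h₇, h₈, h₉⟩⟩

theorem exists_of_mem_edgePiece_self {H : Hypergraph} {σ : ℕ → Hypergraph}
    {x : ℕ ⊕ ℕ × ℕ} (hx : x ∈ edgePiece H H.E σ) :
    ∃ e ∈ H.E, ∃ e' ∈ (σ e).E, x = .inr (e, e') := by
  rcases hx with ⟨e, he, -⟩ | h
  · simp at he
  · exact h

section Splice

open Relation

variable {w : List ℕ} {us : List (List ℕ)} {σ : ℕ → Hypergraph}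

def IsStringSubst (w : List ℕ) (us : List (List ℕ)) (σ : ℕ → Hypergraph) : Prop :=
  ∀ e ∈ (stringGraph w).E, σ e = stringGraph (us.getD (e - 1) [])

/-- Edge `e` of `w•` carries the letter `w[e - 1]`; the string graph of `us[e - 1]` replacing it
occupies the positions `offset us (e - 1), …, offset us e` of `us.flatten•`. -/
def spliceMap (us : List (List ℕ)) : ℕ ⊕ ℕ × ℕ → ℕ :=
  Sum.elim (offset us) fun p => offset us (p.1 - 1) + p.2

@[simp] theorem spliceMap_inl (v : ℕ) : spliceMap us (.inl v) = offset us v := rfl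

@[simp] theorem spliceMap_inr (e u : ℕ) :
    spliceMap us (.inr (e, u)) = offset us (e - 1) + u := rfl

/-- Representatives of the glued nodes: the nodes of `w•` and the inner nodes of the inserted
string graphs. -/
def SpliceCanonical (w : List ℕ) (us : List (List ℕ)) : ℕ ⊕ ℕ × ℕ → Prop
  | .inl v => v ≤ w.length
  | .inr (e, u) => 1 ≤ e ∧ e ≤ w.length ∧ 0 < u ∧ u < (us.getD (e - 1) []).length

theorem glue_stringGraph_start (hσ : IsStringSubst w us σ) {e : ℕ}
    (he : e ∈ (stringGraph w).E) :
    glue (stringGraph w) (stringGraph w).E σ (.inl (e - 1)) (.inr (e, 0)) :=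
  ⟨e, he, 0, by simp [hσ e he, stringGraph], by simp [stringGraph], rfl,
    by simp [hσ e he, stringGraph]⟩

theorem glue_stringGraph_end (hσ : IsStringSubst w us σ) {e : ℕ}
    (he : e ∈ (stringGraph w).E) :
    glue (stringGraph w) (stringGraph w).E σ (.inl e) (.inr (e, (us.getD (e - 1) []).length)) :=
  ⟨e, he, 1, by simp [hσ e he, stringGraph], by simp [stringGraph], rfl,
    by simp [hσ e he, stringGraph]⟩

theorem spliceMap_eq_of_glue (hσ : IsStringSubst w us σ)
    {x y : ℕ ⊕ ℕ × ℕ} (h : glue (stringGraph w) (stringGraph w).E σ x y) :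
    spliceMap us x = spliceMap us y := by
  obtain ⟨e, he, j, hj, -, rfl, rfl⟩ := h
  rw [hσ e he] at hj ⊢
  simp only [stringGraph, List.length_cons, List.length_nil] at hj
  interval_cases j
  · simp [stringGraph]
  · simp [stringGraph, offset_eq_offset_pred_add (mem_stringGraph_E.1 he).1]

theorem exists_spliceCanonical_eqvGen (hσ : IsStringSubst w us σ)
    {x : ℕ ⊕ ℕ × ℕ} (hx : x ∈ nodePiece (stringGraph w) (stringGraph w).E σ) :
    ∃ y, SpliceCanonical w us y ∧ EqvGen (glue (stringGraph w) (stringGraph w).E σ) x y := by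
  rcases hx with ⟨v, hv, rfl⟩ | ⟨e, he, u, hu, rfl⟩
  · exact ⟨.inl v, mem_stringGraph_V.1 hv, .refl _⟩
  rw [hσ e he, mem_stringGraph_V] at hu
  have he' := mem_stringGraph_E.1 he
  rcases Nat.eq_zero_or_pos u with rfl | hu₀
  · exact ⟨.inl (e - 1), (by simp only [SpliceCanonical]; omega),
      .symm _ _ (.rel _ _ (glue_stringGraph_start hσ he))⟩
  rcases hu.lt_or_eq with hu | rfl
  · exact ⟨.inr (e, u), ⟨he'.1, he'.2, hu₀, hu⟩, .refl _⟩
  · exact ⟨.inl e, he'.2, .symm _ _ (.rel _ _ (glue_stringGraph_end hσ he))⟩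

theorem SpliceCanonical.eq_of_spliceMap_eq (hlen : us.length = w.length)
    (hne : ∀ v ∈ us, v ≠ []) {y y' : ℕ ⊕ ℕ × ℕ} (hy : SpliceCanonical w us y)
    (hy' : SpliceCanonical w us y')
    (h : spliceMap us y = spliceMap us y') : y = y' := by
  have interior : ∀ v e u, SpliceCanonical w us (.inr (e, u)) →
      offset us v ≠ offset us (e - 1) + u :=
    fun v e u ⟨he, _, hu₀, hu⟩ => offset_mono.ne_of_lt_of_lt_nat (e - 1) (by omega)
      (by rw [offset_succ]; omega) v
  rcases y with v | ⟨e, u⟩ <;> rcases y' with v' | ⟨e', u'⟩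
  · exact congrArg _ <| (offset_strictMonoOn hne).injOn (Set.mem_Iic.2 (hlen ▸ hy))
      (Set.mem_Iic.2 (hlen ▸ hy')) h
  · exact absurd h (interior v e' u' hy')
  · exact absurd h.symm (interior v' e u hy)
  · obtain ⟨he, -, -, hu⟩ := hy
    obtain ⟨he', -, -, hu'⟩ := hy'
    simp only [spliceMap_inr] at h
    have hee' : e - 1 = e' - 1 := eq_of_mem_Ioc_of_monotone (offset_mono (us := us))
      (x := offset us (e - 1) + u + 1) (by rw [Set.mem_Ioc, offset_succ]; omega)
      (by rw [Set.mem_Ioc, offset_succ]; omega)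
    obtain rfl : e = e' := by omega
    obtain rfl : u = u' := by omega
    rfl

theorem spliceMap_eq_iff_eqvGen (hlen : us.length = w.length) (hne : ∀ v ∈ us, v ≠ [])
    (hσ : IsStringSubst w us σ) {x y : ℕ ⊕ ℕ × ℕ}
    (hx : x ∈ nodePiece (stringGraph w) (stringGraph w).E σ)
    (hy : y ∈ nodePiece (stringGraph w) (stringGraph w).E σ) :
    spliceMap us x = spliceMap us y ↔ EqvGen (glue (stringGraph w) (stringGraph w).E σ) x y := by
  have hf : ∀ {a b}, EqvGen (glue (stringGraph w) (stringGraph w).E σ) a b →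
      spliceMap us a = spliceMap us b :=
    eqvGen_apply_eq (spliceMap us) fun _ _ => spliceMap_eq_of_glue hσ
  refine ⟨fun h => ?_, hf⟩
  obtain ⟨x₀, hx₀, hxx₀⟩ := exists_spliceCanonical_eqvGen hσ hx
  obtain ⟨y₀, hy₀, hyy₀⟩ := exists_spliceCanonical_eqvGen hσ hy
  obtain rfl :=
    hx₀.eq_of_spliceMap_eq hlen hne hy₀ ((hf hxx₀).symm.trans (h.trans (hf hyy₀)))
  exact .trans _ _ _ hxx₀ (.symm _ _ hyy₀)

theorem offset_pred_add_le_length (hlen : us.length = w.length) {e u : ℕ}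
    (he : e ∈ (stringGraph w).E) (hu : u ≤ (us.getD (e - 1) []).length) :
    offset us (e - 1) + u ≤ us.flatten.length := by
  rw [mem_stringGraph_E] at he
  have := offset_mono (us := us) (show e ≤ us.length by omega)
  rw [offset_eq_offset_pred_add he.1, offset_length] at this
  omega

theorem image_spliceMap_nodePiece (hlen : us.length = w.length) (hσ : IsStringSubst w us σ) :
    spliceMap us '' nodePiece (stringGraph w) (stringGraph w).E σ =
      ↑(stringGraph us.flatten).V := by
  ext x
  simp only [Finset.mem_coe, mem_stringGraph_V]
  constructor
  · rintro ⟨_, ⟨v, hv, rfl⟩ | ⟨e, he, u, hu, rfl⟩, rfl⟩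
    · rw [Finset.mem_coe, mem_stringGraph_V] at hv
      exact offset_length (us := us) ▸ offset_mono (by omega)
    · rw [hσ e he, mem_stringGraph_V] at hu
      exact offset_pred_add_le_length hlen he hu
  · intro hx
    rcases Nat.eq_zero_or_pos x with rfl | hx₀
    · exact ⟨.inl 0, Or.inl ⟨0, by simp, rfl⟩, by simp⟩
    obtain ⟨i, hi, hlt, hle⟩ := exists_offset_lt_le hx₀ hx
    have he : i + 1 ∈ (stringGraph w).E := mem_stringGraph_E.2 ⟨by omega, by omega⟩
    rw [offset_succ] at hle
    refine ⟨.inr (i + 1, x - offset us i), Or.inr ⟨i + 1, he, _, ?_, rfl⟩, ?_⟩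
    · rw [hσ _ he, mem_stringGraph_V, Nat.add_sub_cancel]
      omega
    · simp only [spliceMap_inr, Nat.add_sub_cancel]
      omega

theorem injOn_spliceMap_edgePiece (hσ : IsStringSubst w us σ) :
    Set.InjOn (spliceMap us) (edgePiece (stringGraph w) (stringGraph w).E σ) := by
  intro x hx y hy h
  obtain ⟨e, he, e', he', rfl⟩ := exists_of_mem_edgePiece_self hx
  obtain ⟨d, hd, d', hd', rfl⟩ := exists_of_mem_edgePiece_self hy
  rw [hσ e he, mem_stringGraph_E] at he'
  rw [hσ d hd, mem_stringGraph_E] at hd'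
  have he₁ := (mem_stringGraph_E.1 he).1
  have hd₁ := (mem_stringGraph_E.1 hd).1
  simp only [spliceMap_inr] at h
  have hed : e - 1 = d - 1 := eq_of_mem_Ioc_of_monotone (offset_mono (us := us))
    (x := offset us (e - 1) + e') (by rw [Set.mem_Ioc, offset_succ]; omega)
    (by rw [Set.mem_Ioc, offset_succ]; omega)
  obtain rfl : e = d := by omega
  obtain rfl : e' = d' := by omega
  rfl

theorem image_spliceMap_edgePiece (hlen : us.length = w.length) (hσ : IsStringSubst w us σ) :
    spliceMap us '' edgePiece (stringGraph w) (stringGraph w).E σ =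
      ↑(stringGraph us.flatten).E := by
  ext x
  simp only [Finset.mem_coe, mem_stringGraph_E]
  constructor
  · rintro ⟨_, hx, rfl⟩
    obtain ⟨e, he, e', he', rfl⟩ := exists_of_mem_edgePiece_self hx
    rw [hσ e he, mem_stringGraph_E] at he'
    exact ⟨by simp only [spliceMap_inr]; omega, offset_pred_add_le_length hlen he he'.2⟩
  · rintro ⟨hx₀, hx⟩
    obtain ⟨i, hi, hlt, hle⟩ := exists_offset_lt_le hx₀ hx
    have he : i + 1 ∈ (stringGraph w).E := mem_stringGraph_E.2 ⟨by omega, by omega⟩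
    rw [offset_succ] at hle
    refine ⟨.inr (i + 1, x - offset us i), Or.inr ⟨i + 1, he, _, ?_, rfl⟩, ?_⟩
    · rw [hσ _ he, mem_stringGraph_E, Nat.add_sub_cancel]
      omega
    · simp only [spliceMap_inr, Nat.add_sub_cancel]
      omega

theorem spliceMap_new_edge (hlen : us.length = w.length) (hσ : IsStringSubst w us σ)
    {e e' : ℕ} (he : e ∈ (stringGraph w).E) (he' : e' ∈ (σ e).E) :
    (stringGraph us.flatten).lab (spliceMap us (.inr (e, e'))) = (σ e).lab e' ∧
    (stringGraph us.flatten).att (spliceMap us (.inr (e, e'))) =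
      ((σ e).att e').map (fun v => spliceMap us (.inr (e, v))) := by
  rw [hσ e he] at he' ⊢
  rw [mem_stringGraph_E] at he he'
  have hpos : offset us (e - 1) + e' - 1 = offset us (e - 1) + (e' - 1) := by omega
  refine ⟨?_, ?_⟩
  · simp only [stringGraph, spliceMap_inr, hpos]
    exact getD_flatten_offset_add (by omega) (by omega)
  · simp [stringGraph, hpos]

theorem isReplacement_stringGraph_flatten (hlen : us.length = w.length)
    (hne : ∀ v ∈ us, v ≠ []) (hσ : IsStringSubst w us σ) :
    IsReplacement (stringGraph w) (stringGraph w).E σ (stringGraph us.flatten) :=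
  isReplacement_iff.2 ⟨spliceMap us, spliceMap us,
    { subset := subset_rfl
      type_eq := fun e he => by rw [hσ e he]; rfl
      eq_iff_eqvGen := fun _ hx _ hy => spliceMap_eq_iff_eqvGen hlen hne hσ hx hy
      V_eq := (image_spliceMap_nodePiece hlen hσ).symm
      ext_eq := by simp [stringGraph, ← hlen, offset_length]
      injOn_edgePiece := injOn_spliceMap_edgePiece hσ
      E_eq := (image_spliceMap_edgePiece hlen hσ).symm
      old_edge := fun _ he hnot => absurd he hnot
      new_edge := fun _ he _ he' => spliceMap_new_edge hlen hσ he he' }⟩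

end Splice

section Uniqueness

open Function

theorem apply_invFunOn_apply {α β γ : Type*} [Nonempty α] {f : α → β} {g : α → γ}
    {s : Set α} (h : ∀ x ∈ s, ∀ y ∈ s, f x = f y → g x = g y) {x : α} (hx : x ∈ s) :
    g (invFunOn f s (f x)) = g x :=
  h _ (invFunOn_mem ⟨x, hx, rfl⟩) _ hx (invFunOn_eq ⟨x, hx, rfl⟩)

variable {H H₁ H₂ : Hypergraph} {σ : ℕ → Hypergraph} {f₁ g₁ f₂ g₂ : ℕ ⊕ ℕ × ℕ → ℕ}

/-- Both node sets are quotients of the same disjoint union by the same gluing relation. -/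
theorem ReplacementMaps.isoMaps (r₁ : ReplacementMaps H H.E σ H₁ f₁ g₁)
    (r₂ : ReplacementMaps H H.E σ H₂ f₂ g₂) (hext : H.ExtNodes)
    (hσ : ∀ e ∈ H.E, (σ e).AttNodes) :
    IsoMaps H₁ H₂ (f₂ ∘ invFunOn f₁ (nodePiece H H.E σ))
      (g₂ ∘ invFunOn g₁ (edgePiece H H.E σ)) := by
  set N := nodePiece H H.E σ
  set P := edgePiece H H.E σ
  have hker : ∀ x ∈ N, ∀ y ∈ N, f₁ x = f₁ y ↔ f₂ x = f₂ y := fun x hx y hy =>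
    (r₁.eq_iff_eqvGen x hx y hy).trans (r₂.eq_iff_eqvGen x hx y hy).symm
  have hV : ∀ x ∈ N, f₂ (invFunOn f₁ N (f₁ x)) = f₂ x :=
    fun _ => apply_invFunOn_apply fun x hx y hy => (hker x hx y hy).1
  have hE : ∀ x ∈ P, g₂ (invFunOn g₁ P (g₁ x)) = g₂ x :=
    fun _ => apply_invFunOn_apply fun x hx y hy hxy => by rw [r₁.injOn_edgePiece hx hy hxy]
  have memV : ∀ {v}, v ∈ H₁.V → ∃ x ∈ N, f₁ x = v := (Set.ext_iff.1 r₁.V_eq _).1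
  have memE : ∀ {e}, e ∈ H₁.E → ∃ x ∈ P, g₁ x = e := (Set.ext_iff.1 r₁.E_eq _).1
  refine ⟨?_, ?_, ?_, ?_, ?_, ?_, ?_⟩
  · intro a ha b hb hab
    obtain ⟨x, hx, rfl⟩ := memV ha
    obtain ⟨y, hy, rfl⟩ := memV hb
    simp only [comp_apply, hV x hx, hV y hy] at hab
    exact (hker x hx y hy).2 hab
  · apply Finset.coe_injective
    rw [Finset.coe_image, r₁.V_eq, r₂.V_eq, Set.image_image]
    exact Set.image_congr hV
  · intro a ha b hb hab
    obtain ⟨x, hx, rfl⟩ := memE ha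
    obtain ⟨y, hy, rfl⟩ := memE hb
    simp only [comp_apply, hE x hx, hE y hy] at hab
    rw [r₂.injOn_edgePiece hx hy hab]
  · apply Finset.coe_injective
    rw [Finset.coe_image, r₁.E_eq, r₂.E_eq, Set.image_image]
    exact Set.image_congr hE
  · intro a ha
    obtain ⟨x, hx, rfl⟩ := memE ha
    obtain ⟨e, he, e', he', rfl⟩ := exists_of_mem_edgePiece_self hx
    rw [comp_apply, hE _ hx, (r₂.new_edge e he e' he').1, (r₁.new_edge e he e' he').1]
  · intro a ha
    obtain ⟨x, hx, rfl⟩ := memE ha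
    obtain ⟨e, he, e', he', rfl⟩ := exists_of_mem_edgePiece_self hx
    rw [comp_apply, hE _ hx, (r₂.new_edge e he e' he').2, (r₁.new_edge e he e' he').2,
      List.map_map]
    exact List.map_congr_left fun v hv =>
      (hV _ (Or.inr ⟨e, he, v, hσ e he e' he' v hv, rfl⟩)).symm
  · rw [r₂.ext_eq, r₁.ext_eq, List.map_map]
    exact List.map_congr_left fun v hv => (hV _ (Or.inl ⟨v, hext v hv, rfl⟩)).symm

theorem IsReplacement.iso (h₁ : IsReplacement H H.E σ H₁) (h₂ : IsReplacement H H.E σ H₂)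
    (hext : H.ExtNodes) (hσ : ∀ e ∈ H.E, (σ e).AttNodes) : Iso H₁ H₂ := by
  obtain ⟨f₁, g₁, r₁⟩ := isReplacement_iff.1 h₁
  obtain ⟨f₂, g₂, r₂⟩ := isReplacement_iff.1 h₂
  exact iso_iff_exists_isoMaps.2 ⟨_, _, r₁.isoMaps r₂ hext hσ⟩

end Uniqueness

section Transport

open Relation Function

def pieceMap (fV fE : ℕ → ℕ) : ℕ ⊕ ℕ × ℕ → ℕ ⊕ ℕ × ℕ := Sum.map fV (Prod.map fE id)

variable {G H H' : Hypergraph} {fV fE : ℕ → ℕ} {σ : ℕ → Hypergraph}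

namespace IsoMaps

theorem glue_pieceMap (h : IsoMaps G H fV fE) {τ : ℕ → Hypergraph}
    (hτ : ∀ e ∈ G.E, τ e = σ (fE e)) {x y : ℕ ⊕ ℕ × ℕ} (hxy : glue G G.E τ x y) :
    glue H H.E σ (pieceMap fV fE x) (pieceMap fV fE y) := by
  obtain ⟨e, he, j, hj₁, hj₂, rfl, rfl⟩ := hxy
  rw [hτ e he] at hj₁ ⊢
  refine ⟨fE e, h.mem_E he, j, hj₁, by rwa [h.att e he, List.length_map], ?_, rfl⟩
  simp [pieceMap, h.att e he, List.getElem?_eq_getElem hj₂]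

theorem leftInvOn_pieceMap (h : IsoMaps G H fV fE) (τ : ℕ → Hypergraph) :
    Set.LeftInvOn (pieceMap (invFunOn fV G.V) (invFunOn fE G.E)) (pieceMap fV fE)
      (nodePiece G G.E τ) := by
  rintro _ (⟨v, hv, rfl⟩ | ⟨e, he, u, -, rfl⟩)
  · simp [pieceMap, h.injOn_V.leftInvOn_invFunOn hv]
  · simp [pieceMap, h.injOn_E.leftInvOn_invFunOn he]

theorem eqvGen_glue_pieceMap_iff (h : IsoMaps G H fV fE) (hatt : G.AttNodes) (hext : G.ExtNodes)
    {x y : ℕ ⊕ ℕ × ℕ} (hx : x ∈ nodePiece G G.E (σ ∘ fE))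
    (hy : y ∈ nodePiece G G.E (σ ∘ fE)) :
    EqvGen (glue H H.E σ) (pieceMap fV fE x) (pieceMap fV fE y) ↔
      EqvGen (glue G G.E (σ ∘ fE)) x y := by
  refine ⟨fun hxy => ?_, eqvGen_map (pieceMap fV fE) fun _ _ => h.glue_pieceMap fun _ _ => rfl⟩
  have hσ : ∀ e ∈ H.E, σ e = (σ ∘ fE) (invFunOn fE G.E e) := fun e he => by
    obtain ⟨d, hd, rfl⟩ := h.exists_of_mem_E he
    simp [h.injOn_E.leftInvOn_invFunOn hd]
  have := eqvGen_map (pieceMap (invFunOn fV G.V) (invFunOn fE G.E))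
    (fun _ _ => (h.symm hatt hext).glue_pieceMap hσ) hxy
  rwa [h.leftInvOn_pieceMap _ hx, h.leftInvOn_pieceMap _ hy] at this

theorem image_nodePiece (h : IsoMaps G H fV fE) :
    pieceMap fV fE '' nodePiece G G.E (σ ∘ fE) = nodePiece H H.E σ := by
  ext x
  constructor
  · rintro ⟨_, ⟨v, hv, rfl⟩ | ⟨e, he, u, hu, rfl⟩, rfl⟩
    · exact Or.inl ⟨fV v, h.mem_V hv, rfl⟩
    · exact Or.inr ⟨fE e, h.mem_E he, u, hu, rfl⟩
  · rintro (⟨v', hv', rfl⟩ | ⟨e', he', u, hu, rfl⟩)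
    · obtain ⟨v, hv, rfl⟩ := h.exists_of_mem_V hv'
      exact ⟨.inl v, Or.inl ⟨v, hv, rfl⟩, rfl⟩
    · obtain ⟨e, he, rfl⟩ := h.exists_of_mem_E he'
      exact ⟨.inr (e, u), Or.inr ⟨e, he, u, hu, rfl⟩, rfl⟩

theorem image_edgePiece (h : IsoMaps G H fV fE) :
    pieceMap fV fE '' edgePiece G G.E (σ ∘ fE) = edgePiece H H.E σ := by
  ext x
  constructor
  · rintro ⟨_, hx, rfl⟩
    obtain ⟨e, he, e', he', rfl⟩ := exists_of_mem_edgePiece_self hx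
    exact Or.inr ⟨fE e, h.mem_E he, e', he', rfl⟩
  · intro hx
    obtain ⟨e', he', e'', he'', rfl⟩ := exists_of_mem_edgePiece_self hx
    obtain ⟨e, he, rfl⟩ := h.exists_of_mem_E he'
    exact ⟨.inr (e, e''), Or.inr ⟨e, he, e'', he'', rfl⟩, rfl⟩

theorem injOn_pieceMap_edgePiece (h : IsoMaps G H fV fE) :
    Set.InjOn (pieceMap fV fE) (edgePiece G G.E (σ ∘ fE)) := by
  intro x hx y hy hxy
  obtain ⟨e, he, e', -, rfl⟩ := exists_of_mem_edgePiece_self hx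
  obtain ⟨d, hd, d', -, rfl⟩ := exists_of_mem_edgePiece_self hy
  simp only [pieceMap, Sum.map_inr, Prod.map_apply, id_eq, Sum.inr.injEq, Prod.mk.injEq] at hxy
  rw [h.injOn_E he hd hxy.1, hxy.2]

end IsoMaps

theorem ReplacementMaps.of_isoMaps {f g : ℕ ⊕ ℕ × ℕ → ℕ} (h : IsoMaps G H fV fE)
    (hatt : G.AttNodes) (hext : G.ExtNodes) (r : ReplacementMaps H H.E σ H' f g) :
    ReplacementMaps G G.E (σ ∘ fE) H' (f ∘ pieceMap fV fE) (g ∘ pieceMap fV fE) where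
  subset := subset_rfl
  type_eq e he := by rw [comp_apply, r.type_eq _ (h.mem_E he), h.att e he, List.length_map]
  eq_iff_eqvGen x hx y hy :=
    (r.eq_iff_eqvGen _ (h.image_nodePiece ▸ Set.mem_image_of_mem _ hx) _
      (h.image_nodePiece ▸ Set.mem_image_of_mem _ hy)).trans
      (h.eqvGen_glue_pieceMap_iff hatt hext hx hy)
  V_eq := by rw [r.V_eq, ← h.image_nodePiece, Set.image_comp]
  ext_eq := by rw [r.ext_eq, h.ext, List.map_map]; rfl
  injOn_edgePiece := r.injOn_edgePiece.comp h.injOn_pieceMap_edgePiece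
    (h.image_edgePiece ▸ Set.mapsTo_image _ _)
  E_eq := by rw [r.E_eq, ← h.image_edgePiece, Set.image_comp]
  old_edge _ he hnot := absurd he hnot
  new_edge e he := r.new_edge _ (h.mem_E he)

theorem ParallelStep.of_iso {sig : Signature} {T : Table sig} (h : Iso G H)
    (hatt : G.AttNodes) (hext : G.ExtNodes) (hs : ParallelStep T H H') : ParallelStep T G H' := by
  obtain ⟨fV, fE, h⟩ := iso_iff_exists_isoMaps.1 h
  obtain ⟨σ, hσ, hrep⟩ := hs
  obtain ⟨f, g, r⟩ := isReplacement_iff.1 hrep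
  exact ⟨σ ∘ fE, fun e he => h.lab e he ▸ hσ _ (h.mem_E he),
    isReplacement_iff.2 ⟨_, _, r.of_isoMaps h hatt hext⟩⟩

end Transport

section StringTables

variable {sig : Signature} {T : Table sig} {w : List ℕ}

theorem parallelStep_stringGraph_flatten {us : List (List ℕ)}
    (hrules : List.Forall₂ (fun a v => (a, stringGraph v) ∈ T.rules) w us)
    (hne : ∀ v ∈ us, v ≠ []) : ParallelStep T (stringGraph w) (stringGraph us.flatten) := by
  have hlen := hrules.length_eq
  refine ⟨fun e => stringGraph (us.getD (e - 1) []), fun e he => ?_,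
    isReplacement_stringGraph_flatten hlen.symm hne fun _ _ => rfl⟩
  obtain ⟨i, rfl⟩ : ∃ i, e = i + 1 := ⟨e - 1, by rw [mem_stringGraph_E] at he; omega⟩
  have hi : i < w.length := by rw [mem_stringGraph_E] at he; omega
  simp only [stringGraph_lab w hi, Nat.add_sub_cancel, List.getD_eq_getElem _ _ (hlen ▸ hi)]
  exact List.forall₂_iff_get.1 hrules |>.2 i hi (hlen ▸ hi)

theorem ParallelStep.exists_flatten_of_stringGraph {H' : Hypergraph}
    (hT : ∀ r ∈ T.rules, ∃ v ≠ [], r.2 = stringGraph v)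
    (h : ParallelStep T (stringGraph w) H') :
    ∃ us, List.Forall₂ (fun a v => (a, stringGraph v) ∈ T.rules) w us ∧
      Iso (stringGraph us.flatten) H' := by
  obtain ⟨σ, hσ, hrep⟩ := h
  have : ∀ e, ∃ v, e ∈ (stringGraph w).E → v ≠ [] ∧ σ e = stringGraph v := fun e => by
    by_cases he : e ∈ (stringGraph w).E
    · obtain ⟨v, hv, hσv⟩ := hT _ (hσ e he)
      exact ⟨v, fun _ => ⟨hv, hσv⟩⟩
    · exact ⟨[], fun h => absurd h he⟩
  choose word hword using this
  have hE : ∀ {i}, i < w.length → i + 1 ∈ (stringGraph w).E :=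
    fun hi => mem_stringGraph_E.2 ⟨by omega, by omega⟩
  set us := (List.range w.length).map fun i => word (i + 1)
  have hlen : us.length = w.length := by simp [us]
  have hne : ∀ v ∈ us, v ≠ [] := by
    simp only [us, List.mem_map, List.mem_range]
    rintro _ ⟨i, hi, rfl⟩
    exact (hword _ (hE hi)).1
  have hσ' : IsStringSubst w us σ := fun e he => by
    rw [mem_stringGraph_E] at he
    rw [List.getD_eq_getElem _ _ (by omega)]
    simpa [us, Nat.sub_add_cancel he.1] using (hword e (mem_stringGraph_E.2 he)).2
  refine ⟨us, List.forall₂_iff_get.2 ⟨hlen.symm, fun i hi _ => ?_⟩,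
    (isReplacement_stringGraph_flatten hlen hne hσ').iso hrep (stringGraph_extNodes w)
      fun e he => hσ' e he ▸ stringGraph_attNodes _⟩
  have := hσ (i + 1) (hE hi)
  rw [stringGraph_lab w hi, (hword _ (hE hi)).2] at this
  simpa [us] using this

end StringTables

theorem _root_.List.forall₂_replicate {α β : Type*} {R : α → β → Prop} {a : α} {b : β}
    (h : R a b) (n : ℕ) : List.Forall₂ R (List.replicate n a) (List.replicate n b) := by
  induction n with
  | zero => exact .nil
  | succ n ih => exact .cons h ih

theorem _root_.List.Forall₂.mem_flatten {α β : Type*} {R : α → List β → Prop} {l : List α}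
    {us : List (List β)} (h : List.Forall₂ R l us) {a : α} {b : β} (ha : a ∈ l)
    (hR : ∀ v, R a v → b ∈ v) : b ∈ us.flatten := by
  induction h with
  | nil => simp at ha
  | cons hr _ ih =>
    rcases List.mem_cons.1 ha with rfl | ha
    · exact List.mem_flatten.2 ⟨_, List.mem_cons_self, hR _ hr⟩
    · obtain ⟨v, hv, hb⟩ := List.mem_flatten.1 (ih ha)
      exact List.mem_flatten.2 ⟨v, List.mem_cons_of_mem _ hv, hb⟩

theorem _root_.List.Forall₂.exists_of_mem_right {α β : Type*} {R : α → β → Prop} {l : List α}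
    {l' : List β} (h : List.Forall₂ R l l') {b : β} (hb : b ∈ l') : ∃ a ∈ l, R a b := by
  induction h with
  | nil => simp at hb
  | cons hr _ ih =>
    rcases List.mem_cons.1 hb with rfl | hb
    · exact ⟨_, List.mem_cons_self, hr⟩
    · exact (ih hb).imp fun _ h => ⟨List.mem_cons_of_mem _ h.1, h.2⟩

theorem iso_stringGraph_handle {sig : Signature} {a : ℕ} (ha : sig.typ a = 2) :
    Iso (stringGraph [a]) (handle sig a) := by
  refine iso_iff_exists_isoMaps.2 ⟨id, fun _ => 0, ?_, ?_, ?_, ?_, ?_, ?_, ?_⟩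
  · exact Set.injOn_id _
  · simp [stringGraph, handle, ha]
  · intro e he e' he' _
    simp only [Finset.coe_Icc, stringGraph, List.length_singleton, Set.mem_Icc] at he he'
    omega
  · simp [stringGraph, handle]
  · intro e he
    obtain rfl : e = 1 := by simp [stringGraph] at he; omega
    rfl
  · intro e he
    obtain rfl : e = 1 := by simp [stringGraph] at he; omega
    simp [stringGraph, handle, ha, List.range_succ]
  · simp [stringGraph, handle, ha, List.range_succ]

section PowGrammar

/-- `S → SS | a`, `a → F`, `F → F`, with `a = 0`, `S = 1` and the failure symbol `F = 2`. -/
def powWordRules : Set (ℕ × List ℕ) := {(1, [1, 1]), (1, [0]), (0, [2]), (2, [2])}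

theorem mem_powWordRules {a : ℕ} {v : List ℕ} : (a, v) ∈ powWordRules ↔
    (a = 1 ∧ (v = [1, 1] ∨ v = [0])) ∨ ((a = 0 ∨ a = 2) ∧ v = [2]) := by
  simp only [powWordRules, Set.mem_insert_iff, Set.mem_singleton_iff, Prod.mk.injEq]
  tauto

def powSignature : Signature := ⟨{0, 1, 2}, fun _ => 2⟩

def powTable : Table powSignature where
  rules := (fun r => (r.1, stringGraph r.2)) '' powWordRules
  finite := Set.Finite.image _ (by simp [powWordRules])
  rule_lhs := by
    rintro _ ⟨r, hr, rfl⟩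
    rcases hr with rfl | rfl | rfl | rfl <;> simp [powSignature]
  rule_rhs := by
    rintro _ ⟨r, hr, rfl⟩
    refine ⟨stringGraph_over ?_, rfl⟩
    rcases hr with rfl | rfl | rfl | rfl <;> simp [powSignature]
  total := by
    intro L hL
    simp only [powSignature, Finset.mem_insert, Finset.mem_singleton] at hL
    rcases hL with rfl | rfl | rfl
    · exact ⟨_, ⟨(0, [2]), by simp [powWordRules], rfl⟩⟩
    · exact ⟨_, ⟨(1, [0]), by simp [powWordRules], rfl⟩⟩
    · exact ⟨_, ⟨(2, [2]), by simp [powWordRules], rfl⟩⟩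

def powGrammar : PHRGrammar where
  sig := powSignature
  A := {0}
  A_sub := by simp [powSignature]
  S := 1
  S_mem := by simp [powSignature]
  tables := {powTable}
  tables_fin := Set.finite_singleton _
  tables_ne := Set.singleton_nonempty _

theorem mem_powTable_rules {a : ℕ} {v : List ℕ} :
    (a, stringGraph v) ∈ powTable.rules ↔ (a, v) ∈ powWordRules := by
  refine ⟨?_, fun h => ⟨_, h, rfl⟩⟩
  rintro ⟨⟨b, u⟩, hr, h⟩
  obtain ⟨rfl, hu⟩ := Prod.mk.inj h
  rwa [← stringGraph_injective hu]

theorem powTable_rhs : ∀ r ∈ powTable.rules, ∃ v ≠ [], r.2 = stringGraph v := by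
  rintro _ ⟨⟨a, v⟩, hr, rfl⟩
  refine ⟨v, ?_, rfl⟩
  rcases mem_powWordRules.1 hr with ⟨-, rfl | rfl⟩ | ⟨-, rfl⟩ <;> simp

/-- Up to isomorphism, every sentential form of `powGrammar` is the string graph of such a
string; strings containing `F`, or both `a` and `S`, never become terminal. -/
def PowSentential (w : List ℕ) : Prop :=
  (∃ n, w = List.replicate (2 ^ n) 1) ∨ (∃ n, w = List.replicate (2 ^ n) 0) ∨
    2 ∈ w ∨ (0 ∈ w ∧ 1 ∈ w)

theorem PowSentential.flatten {w : List ℕ} {us : List (List ℕ)} (hw : PowSentential w)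
    (hus : List.Forall₂ (fun a v => (a, v) ∈ powWordRules) w us) : PowSentential us.flatten := by
  have dies : ∀ a ∈ w, a = 0 ∨ a = 2 → PowSentential us.flatten := fun a ha ha' =>
    Or.inr <| Or.inr <| Or.inl <| hus.mem_flatten ha fun v hv => by
      rcases mem_powWordRules.1 hv with ⟨rfl, -⟩ | ⟨-, rfl⟩
      · omega
      · simp
  rcases hw with ⟨n, rfl⟩ | ⟨n, rfl⟩ | h2 | ⟨h0, -⟩
  · have hlen : us.length = 2 ^ n := by simp [← hus.length_eq]
    have hS : ∀ v ∈ us, v = [1, 1] ∨ v = [0] := fun v hv => by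
      obtain ⟨a, ha, hr⟩ := hus.exists_of_mem_right hv
      rw [List.eq_of_mem_replicate ha] at hr
      simpa using mem_powWordRules.1 hr
    by_cases hall : ∀ v ∈ us, v = [1, 1]
    · refine Or.inl ⟨n + 1, ?_⟩
      rw [List.eq_replicate_iff.2 ⟨hlen, hall⟩, show [1, 1] = List.replicate 2 1 from rfl,
        List.flatten_replicate_replicate, pow_succ]
    by_cases hall' : ∀ v ∈ us, v = [0]
    · refine Or.inr <| Or.inl ⟨n, ?_⟩
      rw [List.eq_replicate_iff.2 ⟨hlen, hall'⟩, show [0] = List.replicate 1 0 from rfl,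
        List.flatten_replicate_replicate, mul_one]
    push Not at hall hall'
    obtain ⟨v, hv, hv1⟩ := hall
    obtain ⟨v', hv', hv0⟩ := hall'
    refine Or.inr <| Or.inr <| Or.inr
      ⟨List.mem_flatten.2 ⟨v, hv, ?_⟩, List.mem_flatten.2 ⟨v', hv', ?_⟩⟩
    · simp [(hS v hv).resolve_left hv1]
    · simp [(hS v' hv').resolve_right hv0]
  · exact dies 0 (List.mem_replicate.2 ⟨(Nat.two_pow_pos n).ne', rfl⟩) (.inl rfl)
  · exact dies 2 h2 (.inr rfl)
  · exact dies 0 h0 (.inl rfl)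

theorem exists_powSentential_of_derives {X : Hypergraph}
    (h : Derives powGrammar.tables (handle powSignature 1) X) :
    ∃ w, PowSentential w ∧ Iso (stringGraph w) X := by
  induction h with
  | refl => exact ⟨[1], Or.inl ⟨0, rfl⟩, iso_stringGraph_handle rfl⟩
  | tail _ hstep ih =>
    obtain ⟨w, hw, hiso⟩ := ih
    rcases hstep with ⟨T, hT, hs⟩ | hiso'
    · obtain rfl : T = powTable := hT
      obtain ⟨us, hus, hiso''⟩ := (hs.of_iso hiso (stringGraph_attNodes w)
        (stringGraph_extNodes w)).exists_flatten_of_stringGraph powTable_rhs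
      exact ⟨us.flatten, hw.flatten (hus.imp fun _ _ => mem_powTable_rules.1), hiso''⟩
    · exact ⟨w, hw, hiso.trans hiso'⟩

theorem derives_replicate_pow (n : ℕ) :
    Derives powGrammar.tables (handle powSignature 1) (stringGraph (List.replicate (2 ^ n) 0)) := by
  have step : ∀ {a : ℕ} {v : List ℕ} (k : ℕ), (a, v) ∈ powWordRules → v ≠ [] →
      ParallelStep powTable (stringGraph (List.replicate k a))
        (stringGraph (List.replicate k v).flatten) :=
    fun k hr hv => parallelStep_stringGraph_flatten
      (List.forall₂_replicate (R := fun a v => (a, stringGraph v) ∈ powTable.rules)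
        (mem_powTable_rules.2 hr) k) fun _ hu => List.eq_of_mem_replicate hu ▸ hv
  have hS : ∀ k, Derives powGrammar.tables (handle powSignature 1)
      (stringGraph (List.replicate (2 ^ k) 1)) := by
    intro k
    induction k with
    | zero => exact .single (.inr ((iso_stringGraph_handle rfl).symm (stringGraph_attNodes _)
        (stringGraph_extNodes _)))
    | succ k ih =>
      have := step (2 ^ k) (show (1, [1, 1]) ∈ powWordRules by simp [powWordRules]) (by simp)
      rw [show [1, 1] = List.replicate 2 1 from rfl, List.flatten_replicate_replicate, ← pow_succ]
        at this
      exact ih.tail (.inl ⟨powTable, rfl, this⟩)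
  have := step (2 ^ n) (show (1, [0]) ∈ powWordRules by simp [powWordRules]) (by simp)
  rw [show [0] = List.replicate 1 0 from rfl, List.flatten_replicate_replicate, mul_one] at this
  exact (hS n).tail (.inl ⟨powTable, rfl, this⟩)

end PowGrammar

theorem mem_powGrammar_lang {H : Hypergraph} :
    H ∈ powGrammar.lang ↔ ∃ n, Iso (stringGraph (List.replicate (2 ^ n) 0)) H := by
  constructor
  · rintro ⟨hder, hterm⟩
    obtain ⟨w, hw, hiso⟩ := exists_powSentential_of_derives hder
    have h0 : ∀ a ∈ w, a = 0 := by
      simpa [powGrammar] using forall_lab_stringGraph_iff.1 ((hiso.forall_lab_iff).2 hterm)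
    rcases hw with ⟨n, rfl⟩ | ⟨n, rfl⟩ | h2 | ⟨-, h1⟩
    · exact absurd (h0 1 (List.mem_replicate.2 ⟨(Nat.two_pow_pos n).ne', rfl⟩)) one_ne_zero
    · exact ⟨n, hiso⟩
    · exact absurd (h0 2 h2) two_ne_zero
    · exact absurd (h0 1 h1) one_ne_zero
  · rintro ⟨n, hiso⟩
    refine ⟨(derives_replicate_pow n).tail (.inr hiso), hiso.forall_lab_iff.1 ?_⟩
    refine forall_lab_stringGraph_iff.2 fun a ha => ?_
    simp [powGrammar, List.eq_of_mem_replicate ha]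

theorem powGrammar_bounded : powGrammar.Bounded 2 1 :=
  ⟨by simp [powGrammar], fun _ _ _ _ => le_rfl⟩

theorem powGrammar_repetitionFree : powGrammar.RepetitionFree := by
  rintro T rfl r hr
  obtain ⟨v, hv, hr⟩ := powTable_rhs r hr
  exact hr ▸ stringGraph_repetitionFree hv

theorem stringGraphLang_powGrammar : StringGraphLang powGrammar.lang := fun _ hH =>
  let ⟨_, h⟩ := mem_powGrammar_lang.1 hH
  ⟨_, h.symm (stringGraph_attNodes _) (stringGraph_extNodes _)⟩

theorem STR_powGrammar_lang : STR powGrammar.lang = powStringLang \ {[]} := by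
  ext w
  constructor
  · rintro ⟨H, hH, hiso⟩
    obtain ⟨n, h⟩ := mem_powGrammar_lang.1 hH
    obtain rfl := eq_of_iso_stringGraph (h.trans hiso)
    exact ⟨⟨n, rfl⟩, by simp⟩
  · rintro ⟨⟨n, rfl⟩, -⟩
    exact ⟨_, mem_powGrammar_lang.2 ⟨n, Iso.refl _⟩, Iso.refl _⟩

section Semilinear

variable {d : ℕ} {S : Set (Fin d → ℕ)}

theorem LinearSet.exists_ray_of_infinite (hS : LinearSet S) (hinf : S.Infinite) :
    ∃ p q, q ≠ 0 ∧ ∀ c : ℕ, p + c • q ∈ S := by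
  classical
  obtain ⟨p, n, ps, rfl⟩ := hS
  obtain ⟨j, hj⟩ : ∃ j, ps j ≠ 0 := by
    by_contra! h
    refine hinf ((Set.finite_singleton p).subset ?_)
    rintro _ ⟨c, rfl⟩
    simp [h]
  refine ⟨p, ps j, hj, fun c => ⟨fun j' => if j' = j then c else 0, ?_⟩⟩
  funext i
  simp

theorem SemilinearSet.exists_ray_of_infinite (hS : SemilinearSet S) (hinf : S.Infinite) :
    ∃ p q, q ≠ 0 ∧ ∀ c : ℕ, p + c • q ∈ S := by
  obtain ⟨m, Ss, hlin, rfl⟩ := hS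
  obtain ⟨i, hi⟩ : ∃ i, (Ss i).Infinite := by
    by_contra! h
    exact hinf (Set.finite_iUnion h)
  obtain ⟨p, q, hq, hpq⟩ := (hlin i).exists_ray_of_infinite hi
  exact ⟨p, q, hq, fun c => Set.mem_iUnion.2 ⟨i, hpq c⟩⟩

end Semilinear

theorem not_forall_exists_add_mul_eq_two_pow {p q : ℕ} (hq : q ≠ 0) :
    ¬ ∀ c, ∃ n, p + c * q = 2 ^ n := by
  intro h
  obtain ⟨a, ha⟩ := h 2
  obtain ⟨b, hb⟩ := h 3
  have hab : a < b := (Nat.pow_lt_pow_iff_right (show 1 < 2 by norm_num)).1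
    (show 2 ^ a < 2 ^ b by omega)
  have hba : b < a + 1 := (Nat.pow_lt_pow_iff_right (show 1 < 2 by norm_num)).1
    (show 2 ^ b < 2 ^ (a + 1) by rw [pow_succ]; omega)
  omega

theorem parikh_powStringLang :
    {v | ∃ w ∈ powStringLang, v = parikh (fun _ : Fin 1 => 0) w} =
      Set.range fun n (_ : Fin 1) => 2 ^ n := by
  ext v
  simp only [powStringLang, Set.mem_ofPred_eq, Set.mem_range]
  constructor
  · rintro ⟨_, ⟨n, rfl⟩, rfl⟩
    exact ⟨n, funext fun _ => by simp [parikh]⟩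
  · rintro ⟨n, rfl⟩
    exact ⟨_, ⟨n, rfl⟩, funext fun _ => by simp [parikh]⟩

theorem powStringLang_not_semilinear : ¬ SemilinearLang (fun _ : Fin 1 => 0) powStringLang := by
  intro h
  rw [SemilinearLang, parikh_powStringLang] at h
  obtain ⟨p, q, hq, hray⟩ := h.exists_ray_of_infinite <| Set.infinite_range_of_injective
    fun m n hmn => Nat.pow_right_injective le_rfl (congrFun hmn 0)
  refine not_forall_exists_add_mul_eq_two_pow (p := p 0) (q := q 0)
    (fun h₀ => hq (funext fun i => ?_)) fun c => ?_
  · rwa [Subsingleton.elim i 0]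
  · obtain ⟨n, hn⟩ := hray c
    exact ⟨n, by simpa using (congrFun hn 0).symm⟩

/-- `{a^(2^n) | n ∈ ℕ}` is a repetition-free `(2,1)`-PHRS language which is
not semilinear. -/
theorem pow_lang_rf_phrs_not_semilinear :
    IsRFPHRSLanguage 2 1 powStringLang ∧
    ¬ SemilinearLang (fun _ : Fin 1 => 0) powStringLang :=
  ⟨⟨powGrammar, powGrammar_bounded, powGrammar_repetitionFree, stringGraphLang_powGrammar,
    STR_powGrammar_lang⟩, powStringLang_not_semilinear⟩

end PHR
end

section
/- Let G_1 and G_2 be groups generated by finite disjoint sets A_1 and A_2 respectively, let L_i = WP_{A_i}(G_i) for i = 1, 2, and let X = A_1 ∪ A_2, which generates the free product G_1 * G_2. Then WP_X(G_1 * G_2) is the smallest language L ⊆ (X ∪ X⁻¹)* such that ε ∈ L and, for every i ∈ {1, 2}, every w ∈ L_i, and all u, v ∈ (X ∪ X⁻¹)*, if uv ∈ L then uwv ∈ L. -/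
namespace PHR

/-!
A word of either factor's word problem evaluates to `1` in `G₁ * G₂`, so the word problem of
`G₁ * G₂` is closed under inserting and deleting such words. Conversely, cut a nonempty word `w`
representing `1` into maximal blocks of letters from the same factor. The values of consecutive
blocks lie in different factors, so if none of them were trivial they would form a nonempty
reduced word, whose product is not `1` by the normal form theorem for free products. Hence some
block lies in the word problem of its factor; deleting it and inducting on the length puts `w`
into every language that contains the empty word and is closed under these insertions.
-/

section WordEval

variable {G H : Type*} [Group G] [Group H] {n m : ℕ}

@[simp]
lemma wordEval_append (x : Fin n → G) (u v : List ℕ) :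
    wordEval x (u ++ v) = wordEval x u * wordEval x v := by
  simp [wordEval]

lemma wordEval_flatten (x : Fin n → G) (ws : List (List ℕ)) :
    wordEval x ws.flatten = (ws.map (wordEval x)).prod := by
  induction ws with
  | nil => rfl
  | cons w ws ih => simp [ih]

lemma map_wordEval (φ : G →* H) (x : Fin n → G) (w : List ℕ) :
    φ (wordEval x w) = wordEval (φ ∘ x) w := by
  simp only [wordEval, map_list_prod, List.map_map]
  congr 1
  refine List.map_congr_left fun a _ => ?_
  simp only [Function.comp_apply]
  split_ifs <;> simp

lemma wordEval_finAppend_of_lt (x : Fin n → G) (x' : Fin m → G) {w : List ℕ}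
    (hw : ∀ a ∈ w, a < 2 * n) : wordEval (Fin.append x x') w = wordEval x w := by
  simp only [wordEval]
  congr 1
  refine List.map_congr_left fun a ha => ?_
  have h : a / 2 < n := by have := hw a ha; omega
  rw [dif_pos h, dif_pos (by omega)]
  rw [show (⟨a / 2, _⟩ : Fin (n + m)) = Fin.castAdd m ⟨a / 2, h⟩ from rfl, Fin.append_left]

lemma wordEval_finAppend_map_add (x : Fin n → G) (x' : Fin m → G) (w : List ℕ) :
    wordEval (Fin.append x x') (w.map (· + 2 * n)) = wordEval x' w := by
  simp only [wordEval, List.map_map]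
  congr 1
  refine List.map_congr_left fun a _ => ?_
  have hmod : (a + 2 * n) % 2 = a % 2 := by omega
  simp only [Function.comp_apply, hmod]
  by_cases h : a / 2 < m
  · rw [dif_pos (by omega), dif_pos h,
      show (⟨(a + 2 * n) / 2, _⟩ : Fin (n + m)) = Fin.natAdd n ⟨a / 2, h⟩ from Fin.ext (by
        simp only [Fin.natAdd_mk]; omega), Fin.append_right]
  · rw [dif_neg (by omega), dif_neg h]

lemma append_append_mem_wordProblem_iff {x : Fin n → G} {w : List ℕ} (hw : w ∈ wordProblem x)
    (u v : List ℕ) : u ++ w ++ v ∈ wordProblem x ↔ u ++ v ∈ wordProblem x := by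
  obtain ⟨hw_lt, hw_one⟩ := hw
  refine and_congr ?_ (by rw [wordEval_append, wordEval_append, wordEval_append, hw_one, mul_one])
  simp only [List.mem_append]
  exact ⟨fun h a ha => h a (ha.imp_left .inl), fun h a ha => ha.elim
    (·.elim (fun hu => h a (.inl hu)) (hw_lt a)) (fun hv => h a (.inr hv))⟩

end WordEval

theorem _root_.Monoid.CoprodI.exists_snd_eq_one_of_prod_eq_one {ι : Type*} {M : ι → Type*}
    [∀ i, Monoid (M i)] {l : List (Σ i, M i)} (hl : l.IsChain fun s t => s.1 ≠ t.1)
    (hprod : (l.map fun s => Monoid.CoprodI.of s.2).prod = 1) (hne : l ≠ []) :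
    ∃ s ∈ l, s.2 = 1 := by
  classical
  by_contra! hone
  have : (⟨l, hone, hl⟩ : Monoid.CoprodI.Word M) = .empty :=
    Monoid.CoprodI.Word.equiv.symm.injective (hprod.trans Monoid.CoprodI.Word.prod_empty.symm)
  exact hne (congrArg Monoid.CoprodI.Word.toList this)

lemma map_sub_add_cancel {k : ℕ} {m : List ℕ} (hm : ∀ a ∈ m, k ≤ a) :
    (m.map (· - k)).map (· + k) = m := by
  rw [List.map_map]
  exact (List.map_congr_left fun a ha => Nat.sub_add_cancel (hm a ha)).trans (List.map_id m)

section FreeProduct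

open Monoid

universe u

variable {G₁ G₂ : Type u} [Group G₁] [Group G₂] {n₁ n₂ : ℕ}
  (x₁ : Fin n₁ → G₁) (x₂ : Fin n₂ → G₂)

def coprodGens : Fin (n₁ + n₂) → Coprod G₁ G₂ :=
  Fin.append (fun i => Coprod.inl (x₁ i)) (fun i => Coprod.inr (x₂ i))

def factorWordProblems : Set (List ℕ) :=
  wordProblem x₁ ∪ (fun w => w.map (· + 2 * n₁)) '' wordProblem x₂

theorem closure_range_coprodGens (hx₁ : Subgroup.closure (Set.range x₁) = ⊤)
    (hx₂ : Subgroup.closure (Set.range x₂) = ⊤) :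
    Subgroup.closure (Set.range (coprodGens x₁ x₂)) = ⊤ := by
  rw [eq_top_iff, ← Coprod.range_inl_sup_range_inr, MonoidHom.range_eq_map,
    MonoidHom.range_eq_map, ← hx₁, ← hx₂, MonoidHom.map_closure, MonoidHom.map_closure,
    ← Subgroup.closure_union]
  refine Subgroup.closure_mono ?_
  rintro _ (⟨_, ⟨i, rfl⟩, rfl⟩ | ⟨_, ⟨i, rfl⟩, rfl⟩)
  exacts [⟨Fin.castAdd n₂ i, Fin.append_left _ _ i⟩, ⟨Fin.natAdd n₁ i, Fin.append_right _ _ i⟩]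

lemma wordEval_coprodGens_of_lt {w : List ℕ} (hw : ∀ a ∈ w, a < 2 * n₁) :
    wordEval (coprodGens x₁ x₂) w = Coprod.inl (wordEval x₁ w) := by
  rw [coprodGens, wordEval_finAppend_of_lt _ _ hw, map_wordEval]
  rfl

lemma wordEval_coprodGens_map_add (w : List ℕ) :
    wordEval (coprodGens x₁ x₂) (w.map (· + 2 * n₁)) = Coprod.inr (wordEval x₂ w) := by
  rw [coprodGens, wordEval_finAppend_map_add, map_wordEval]
  rfl

lemma factorWordProblems_subset : factorWordProblems x₁ x₂ ⊆ wordProblem (coprodGens x₁ x₂) := by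
  intro w hw
  rcases hw with ⟨hlt, hone⟩ | ⟨w, ⟨hlt, hone⟩, rfl⟩
  · refine ⟨fun a ha => by have := hlt a ha; omega, ?_⟩
    rw [wordEval_coprodGens_of_lt x₁ x₂ hlt, hone, map_one]
  · refine ⟨fun a ha => ?_, by rw [wordEval_coprodGens_map_add, hone, map_one]⟩
    obtain ⟨b, hb, rfl⟩ := List.mem_map.mp ha
    have := hlt b hb
    omega

-- Mathlib's normal form theorem is for indexed free products, so `G₁ * G₂` is mapped into the
-- free product of the family `true ↦ G₁, false ↦ G₂`.
def boolFamily (G₁ G₂ : Type u) (i : Bool) : Type u := cond i G₁ G₂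

instance : ∀ i, Group (boolFamily G₁ G₂ i)
  | true => ‹Group G₁›
  | false => ‹Group G₂›

def toCoprodI : Coprod G₁ G₂ →* CoprodI (boolFamily G₁ G₂) :=
  Coprod.lift (CoprodI.of (M := boolFamily G₁ G₂) (i := true))
    (CoprodI.of (M := boolFamily G₁ G₂) (i := false))

def sameFactor (n₁ a b : ℕ) : Bool := decide (a < 2 * n₁) == decide (b < 2 * n₁)

-- For a block `m` of letters from a single factor: that factor, read off from the first letter,
-- and the value of `m` in it.
def syllable (m : List ℕ) : Σ i, boolFamily G₁ G₂ i :=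
  if m.headD 0 < 2 * n₁ then ⟨true, wordEval x₁ m⟩
  else ⟨false, wordEval x₂ (m.map (· - 2 * n₁))⟩

lemma syllable_of_lt {m : List ℕ} (h : m.headD 0 < 2 * n₁) :
    syllable x₁ x₂ m = ⟨true, wordEval x₁ m⟩ :=
  if_pos h

lemma syllable_of_not_lt {m : List ℕ} (h : ¬m.headD 0 < 2 * n₁) :
    syllable x₁ x₂ m = ⟨false, wordEval x₂ (m.map (· - 2 * n₁))⟩ :=
  if_neg h

lemma syllable_fst (m : List ℕ) : (syllable x₁ x₂ m).1 = decide (m.headD 0 < 2 * n₁) := by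
  by_cases h : m.headD 0 < 2 * n₁
  · rw [syllable_of_lt x₁ x₂ h, decide_eq_true h]
  · rw [syllable_of_not_lt x₁ x₂ h, decide_eq_false h]

lemma of_syllable {m : List ℕ} (hm : ∀ a ∈ m, a < 2 * n₁ ↔ m.headD 0 < 2 * n₁) :
    CoprodI.of (syllable x₁ x₂ m).2 = toCoprodI (wordEval (coprodGens x₁ x₂) m) := by
  by_cases h : m.headD 0 < 2 * n₁
  · rw [syllable_of_lt x₁ x₂ h, wordEval_coprodGens_of_lt x₁ x₂ fun a ha => (hm a ha).2 h]
    exact (Coprod.lift_apply_inl _ _ _).symm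
  · have hge : ∀ a ∈ m, 2 * n₁ ≤ a := fun a ha => not_lt.1 ((hm a ha).not.2 h)
    rw [syllable_of_not_lt x₁ x₂ h]
    conv_rhs => rw [← map_sub_add_cancel hge, wordEval_coprodGens_map_add]
    exact (Coprod.lift_apply_inr _ _ _).symm

lemma mem_factorWordProblems_of_syllable_eq_one {m : List ℕ}
    (hm : ∀ a ∈ m, a < 2 * n₁ ↔ m.headD 0 < 2 * n₁) (hlt : ∀ a ∈ m, a < 2 * (n₁ + n₂))
    (h1 : (syllable x₁ x₂ m).2 = 1) : m ∈ factorWordProblems x₁ x₂ := by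
  by_cases h : m.headD 0 < 2 * n₁
  · rw [syllable_of_lt x₁ x₂ h] at h1
    exact .inl ⟨fun a ha => (hm a ha).2 h, h1⟩
  · rw [syllable_of_not_lt x₁ x₂ h] at h1
    have hge : ∀ a ∈ m, 2 * n₁ ≤ a := fun a ha => not_lt.1 ((hm a ha).not.2 h)
    refine .inr ⟨m.map (· - 2 * n₁), ⟨fun a ha => ?_, h1⟩, map_sub_add_cancel hge⟩
    obtain ⟨b, hb, rfl⟩ := List.mem_map.mp ha
    have := hlt b hb
    have := hge b hb
    omega

lemma lt_iff_of_mem_splitBy {w m : List ℕ} (hm : m ∈ w.splitBy (sameFactor n₁)) :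
    ∀ a ∈ m, a < 2 * n₁ ↔ m.headD 0 < 2 * n₁ := by
  intro a ha
  have hc : (m.map fun a => decide (a < 2 * n₁)).IsChain (· = ·) :=
    (List.isChain_map _).2 ((List.isChain_of_mem_splitBy hm).imp fun _ _ h => by
      simpa [sameFactor] using h)
  obtain _ | ⟨c, m⟩ := m
  · simp at ha
  rcases List.mem_cons.1 ha with rfl | ha
  · rfl
  · exact (decide_eq_decide.1 (hc.rel_cons (List.mem_map_of_mem ha))).symm

lemma isChain_syllable_splitBy (w : List ℕ) :
    ((w.splitBy (sameFactor n₁)).map (syllable x₁ x₂)).IsChain fun s t => s.1 ≠ t.1 := by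
  rw [List.isChain_map]
  refine (List.isChain_getLast_head_splitBy _ w).imp_of_mem_imp
    fun m m' hm hm' ⟨hne, hne', hr⟩ => ?_
  rw [syllable_fst, syllable_fst, ne_eq, decide_eq_decide,
    ← lt_iff_of_mem_splitBy hm _ (List.getLast_mem hne),
    ← lt_iff_of_mem_splitBy hm' _ (List.head_mem hne')]
  simpa [sameFactor] using hr

theorem exists_infix_mem_factorWordProblems {w : List ℕ}
    (hw : w ∈ wordProblem (coprodGens x₁ x₂)) (hne : w ≠ []) :
    ∃ u b v, w = u ++ b ++ v ∧ b ≠ [] ∧ b ∈ factorWordProblems x₁ x₂ := by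
  have hflat := List.flatten_splitBy (sameFactor n₁) w
  have hprod : (((w.splitBy (sameFactor n₁)).map (syllable x₁ x₂)).map
      fun s => CoprodI.of s.2).prod = 1 :=
    calc _ = ((w.splitBy (sameFactor n₁)).map
          fun m => toCoprodI (wordEval (coprodGens x₁ x₂) m)).prod := by
          rw [List.map_map]
          exact congrArg List.prod (List.map_congr_left fun m hm =>
            of_syllable x₁ x₂ (lt_iff_of_mem_splitBy hm))
      _ = toCoprodI (wordEval (coprodGens x₁ x₂) (w.splitBy (sameFactor n₁)).flatten) := by
          rw [wordEval_flatten, map_list_prod, List.map_map]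
          rfl
      _ = 1 := by rw [hflat, hw.2, map_one]
  obtain ⟨s, hs, hs1⟩ := CoprodI.exists_snd_eq_one_of_prod_eq_one
    (isChain_syllable_splitBy x₁ x₂ w) hprod
    (List.map_eq_nil_iff.not.2 (List.splitBy_ne_nil.2 hne))
  obtain ⟨m, hm, rfl⟩ := List.mem_map.mp hs
  obtain ⟨u, v, huv⟩ := List.append_of_mem hm
  refine ⟨u.flatten, m, v.flatten, ?_, List.ne_nil_of_mem_splitBy hm,
    mem_factorWordProblems_of_syllable_eq_one x₁ x₂ (lt_iff_of_mem_splitBy hm)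
      (fun a ha => hw.1 a ?_) hs1⟩
  · rw [← hflat, huv]
    simp
  · rw [← hflat]
    exact List.mem_flatten_of_mem hm ha

theorem wordProblem_coprodGens_subset {L : Set (List ℕ)} (hnil : [] ∈ L)
    (hins : ∀ w ∈ factorWordProblems x₁ x₂, ∀ u v : List ℕ, u ++ v ∈ L → u ++ w ++ v ∈ L) :
    wordProblem (coprodGens x₁ x₂) ⊆ L := by
  intro w hw
  induction hlen : w.length using Nat.strong_induction_on generalizing w with
  | _ k ih =>
    rcases eq_or_ne w [] with rfl | hne
    · exact hnil
    obtain ⟨u, b, v, rfl, hb, hfac⟩ := exists_infix_mem_factorWordProblems x₁ x₂ hw hne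
    have huv := (append_append_mem_wordProblem_iff (factorWordProblems_subset x₁ x₂ hfac) u v).1 hw
    refine hins b hfac u v (ih _ ?_ huv rfl)
    have := List.length_pos_iff.2 hb
    simp only [← hlen, List.length_append]
    omega

end FreeProduct

/-- **Recursive description of the word problem of a free product.** Let `G₁`,
`G₂` be groups generated by finite sequences `x₁`, `x₂`; the concatenated
sequence `y` generates the free product `G₁ * G₂`, and the word problem of
`G₁ * G₂` w.r.t. `y` is the smallest language `L` over the combined alphabet
containing the empty word and closed under inserting words of the word
problems of `G₁` and `G₂` (the latter suitably re-encoded over the combined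
alphabet) at arbitrary positions. -/
theorem wp_free_product_smallest {G₁ G₂ : Type} [Group G₁] [Group G₂]
    {n₁ n₂ : ℕ} (x₁ : Fin n₁ → G₁) (x₂ : Fin n₂ → G₂)
    (hx₁ : Subgroup.closure (Set.range x₁) = ⊤)
    (hx₂ : Subgroup.closure (Set.range x₂) = ⊤) :
    let y : Fin (n₁ + n₂) → Monoid.Coprod G₁ G₂ :=
      Fin.append (fun i => Monoid.Coprod.inl (x₁ i))
        (fun i => Monoid.Coprod.inr (x₂ i))
    let L₁ : Set (List ℕ) := wordProblem x₁
    let L₂ : Set (List ℕ) :=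
      (fun w : List ℕ => w.map (fun a => a + 2 * n₁)) '' wordProblem x₂
    Subgroup.closure (Set.range y) = ⊤ ∧
    -- the word problem of the free product satisfies the closure conditions
    ([] ∈ wordProblem y ∧
      ∀ w, (w ∈ L₁ ∨ w ∈ L₂) → ∀ u v : List ℕ,
        u ++ v ∈ wordProblem y → u ++ w ++ v ∈ wordProblem y) ∧
    -- and it is the smallest such language over the combined alphabet
    (∀ L : Set (List ℕ), (∀ w ∈ L, ∀ a ∈ w, a < 2 * (n₁ + n₂)) →
      [] ∈ L →
      (∀ w, (w ∈ L₁ ∨ w ∈ L₂) → ∀ u v : List ℕ, u ++ v ∈ L → u ++ w ++ v ∈ L) →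
      wordProblem y ⊆ L) := by
  intro y L₁ L₂
  refine ⟨closure_range_coprodGens x₁ x₂ hx₁ hx₂, ⟨⟨List.forall_mem_nil _, rfl⟩, ?_⟩,
    fun L _ hnil hins => wordProblem_coprodGens_subset x₁ x₂ hnil hins⟩
  exact fun w hw u v huv =>
    (append_append_mem_wordProblem_iff (factorWordProblems_subset x₁ x₂ hw) u v).2 huv

end PHR
end
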